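/- arXiv:2010.00184 — 4 statements merged into one kernel-verified Lean document; each statement's English description precedes it below -/
import Mathlib

section
/- Let μ be a regular uncountable cardinal, C a class of <μ-presented R-modules, and M a μ-generated R-module. If M is C-filtered, then M admits a C-filtration of ordinal length at most μ all of whose entries are <μ-generated submodules. -/
universe u v

open Cardinal

variable (R : Type u) [Ring R]

/-- The quotient `N'/N` of two submodules of a module, presented as the quotient of `N'`
by the trace of `N` on `N'`. -/
abbrev SubQuot {M : Type v} [AddCommGroup M] [Module R M] (N N' : Submodule R M) : Type v :=
  N' ⧸ N.comap N'.subtype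

/-- `F` is a `C`-filtration of `M` of length `η`: an increasing continuous chain of
submodules starting at `⊥` and ending (at stage `η`) at `⊤`, all of whose consecutive
quotients are isomorphic to members of `C`. -/
structure IsCFiltration (C : Set (ModuleCat.{v} R)) {M : Type v} [AddCommGroup M]
    [Module R M] (η : Ordinal.{v}) (F : Ordinal.{v} → Submodule R M) : Prop where
  bot : F 0 = ⊥
  top : F η = ⊤
  mono : ∀ i j : Ordinal.{v}, i ≤ j → j ≤ η → F i ≤ F j
  continuous : ∀ i : Ordinal.{v}, i ≤ η → Order.IsSuccLimit i →
    F i = ⨆ j : {j : Ordinal.{v} // j < i}, F j.1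
  quot : ∀ i : Ordinal.{v}, i + 1 ≤ η →
    ∃ P ∈ C, Nonempty ((SubQuot R (F i) (F (i + 1))) ≃ₗ[R] P)

/-- A module is `C`-filtered if it admits a `C`-filtration. -/
def IsCFiltered (C : Set (ModuleCat.{v} R)) (M : Type v) [AddCommGroup M]
    [Module R M] : Prop :=
  ∃ (η : Ordinal.{v}) (F : Ordinal.{v} → Submodule R M), IsCFiltration R C η F

/-- A module is `C`-filtered via a filtration of length `< μ`. -/
def IsCFilteredLt (C : Set (ModuleCat.{v} R)) (μ : Cardinal.{v}) (M : Type v)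
    [AddCommGroup M] [Module R M] : Prop :=
  ∃ η : Ordinal.{v}, η < μ.ord ∧ ∃ F : Ordinal.{v} → Submodule R M, IsCFiltration R C η F

/-- A module is `<μ`-presented: it has `<μ` many generators and `<μ` many relations. -/
def LtPresented (μ : Cardinal.{v}) (N : Type v) [AddCommGroup N] [Module R N] : Prop :=
  ∃ s : Set N, #s < μ ∧ Submodule.span R s = ⊤ ∧
    ∃ t : Set (s →₀ R), #t < Cardinal.lift.{u} μ ∧
      Submodule.span R t =
        LinearMap.ker (Finsupp.linearCombination R ((↑) : s → N))

/-- `P_μ(X)`: the subsets of `X` of size `< μ`. -/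
def PMu (μ : Cardinal.{v}) (X : Type v) : Set (Set X) := {z | #z < μ}

/-- `D` is club in `P_μ(X)`: it consists of `<μ`-sized sets, is `⊆`-cofinal, and is
closed under unions of `⊆`-increasing chains of length `< μ`. -/
def IsClubIn (μ : Cardinal.{v}) {X : Type v} (D : Set (Set X)) : Prop :=
  D ⊆ PMu μ X ∧
  (∀ z : Set X, #z < μ → ∃ d ∈ D, z ⊆ d) ∧
  (∀ (ι : Type v) [LinearOrder ι] [Nonempty ι], #ι < μ →
    ∀ c : ι → Set X, (∀ i j : ι, i ≤ j → c i ⊆ c j) → (∀ i, c i ∈ D) → (⋃ i, c i) ∈ D)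

/-- `S` is stationary in `P_μ(X)`: it meets every club. -/
def IsStationaryIn (μ : Cardinal.{v}) {X : Type v} (S : Set (Set X)) : Prop :=
  ∀ D : Set (Set X), IsClubIn μ D → (S ∩ D).Nonempty

/-!
Fix a `C`-filtration `F` of length `η` and pick, for every step `i < η`, fewer than `μ` elements
`gens i` generating `F (i + 1)` over `F i`. As `F (i + 1) / F i` is `<μ`-presented, the module
`span (gens i) ⊓ F i` is spanned by fewer than `μ` elements, and these only involve the generators
of a set `deps i` of fewer than `μ` earlier steps. For a set `U` of steps closed under `deps`,
adding one more step `α ∉ U` with `deps α ⊆ U` to `⨆ j ∈ U, span (gens j)` produces a quotient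
isomorphic to `F (α + 1) / F α` (Hill's lemma).

The `μ` generators of `M` involve only a set `Z` of `μ` steps, and each step has a `deps`-closure
of size `< μ` because `μ` is regular and uncountable. Enumerate `Z` in order type `μ` and order the
steps in these closures first by the earliest element of `Z` whose closure contains them, then by
their position in `F`: every step comes after its `deps`, and initial segments have size `< μ`.
The spans of these initial segments form the required filtration of length at most `μ`.
-/

variable {R}

section BlockSpan

variable {M : Type v} [AddCommGroup M] [Module R M] {ι : Type*} (A : ι → Set M)

variable (R) in
noncomputable def blockSpan (V : Set ι) : Submodule R M :=
  Submodule.span R (⋃ i ∈ V, A i)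

variable {A} {V W : Set ι}

theorem blockSpan_mono (h : V ⊆ W) : blockSpan R A V ≤ blockSpan R A W :=
  Submodule.span_mono (Set.biUnion_subset_biUnion_left h)

@[simp]
theorem blockSpan_empty : blockSpan R A (∅ : Set ι) = ⊥ := by
  simp [blockSpan]

theorem blockSpan_insert (i : ι) :
    blockSpan R A (insert i V) = Submodule.span R (A i) ⊔ blockSpan R A V := by
  rw [blockSpan, Set.biUnion_insert, Submodule.span_union, blockSpan]

theorem blockSpan_le_iff {N : Submodule R M} :
    blockSpan R A V ≤ N ↔ ∀ i ∈ V, Submodule.span R (A i) ≤ N := by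
  simp only [blockSpan, Submodule.span_le, Set.iUnion₂_subset_iff]

theorem span_le_blockSpan {i : ι} (hi : i ∈ V) : Submodule.span R (A i) ≤ blockSpan R A V :=
  blockSpan_le_iff.1 le_rfl i hi

theorem blockSpan_iUnion {κ : Sort*} (V : κ → Set ι) :
    blockSpan R A (⋃ k, V k) = ⨆ k, blockSpan R A (V k) := by
  simp only [blockSpan, Set.biUnion_iUnion, Submodule.span_iUnion]

theorem exists_finite_of_mem_blockSpan {x : M} (hx : x ∈ blockSpan R A V) :
    ∃ W ⊆ V, W.Finite ∧ x ∈ blockSpan R A W := by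
  obtain ⟨t, ht, hxt⟩ := Submodule.mem_span_finite_of_mem_span hx
  rw [Set.biUnion_eq_iUnion] at ht
  obtain ⟨I, hI, htI⟩ := Set.finite_subset_iUnion t.finite_toSet ht
  refine ⟨(↑) '' I, Subtype.coe_image_subset V I, hI.image _, Submodule.span_mono ?_ hxt⟩
  simpa only [Set.biUnion_image] using htI

end BlockSpan

theorem exists_subset_mk_le_of_subset_blockSpan {M ι : Type v} [AddCommGroup M] [Module R M]
    {A : ι → Set M} {V : Set ι} {B : Set M} (hB : B ⊆ blockSpan R A V) :
    ∃ W ⊆ V, #W ≤ #B * ℵ₀ ∧ B ⊆ blockSpan R A W := by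
  choose W hWV hWfin hW using fun b : B => exists_finite_of_mem_blockSpan (hB b.2)
  refine ⟨⋃ b, W b, Set.iUnion_subset hWV, ?_, fun b hb => ?_⟩
  · calc #(⋃ b, W b) ≤ #B * ⨆ b, #(W b) := Cardinal.mk_iUnion_le W
      _ ≤ #B * ℵ₀ := by gcongr; exact ciSup_le' fun b => (hWfin b).lt_aleph0.le
  · exact blockSpan_mono (Set.subset_iUnion W ⟨b, hb⟩) (hW ⟨b, hb⟩)

noncomputable def subQuotEquivOfInfEq {M : Type v} [AddCommGroup M] [Module R M]
    {N₁ N₁' N₂ N₂' q : Submodule R M} (h₁ : N₁' = q ⊔ N₁) (h₂ : N₂' = q ⊔ N₂)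
    (h : q ⊓ N₁ = q ⊓ N₂) : SubQuot R N₁ N₁' ≃ₗ[R] SubQuot R N₂ N₂' := by
  subst h₁ h₂
  exact (LinearMap.quotientInfEquivSupQuotient q N₁).symm ≪≫ₗ
    Submodule.quotEquivOfEq _ _ (by rw [← Submodule.comap_inf, ← Submodule.comap_inf, h]) ≪≫ₗ
    LinearMap.quotientInfEquivSupQuotient q N₂

namespace Ordinal.ToType

variable {η : Ordinal.{v}}

theorem coe_lt (i : η.ToType) : (i : Ordinal) < η :=
  (toOrd i).2

theorem coe_lt_coe {i j : η.ToType} : (i : Ordinal) < j ↔ i < j :=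
  mk.symm.lt_iff_lt

theorem coe_le_coe {i j : η.ToType} : (i : Ordinal) ≤ j ↔ i ≤ j :=
  mk.symm.le_iff_le

theorem exists_coe_eq {o : Ordinal.{v}} (h : o < η) : ∃ i : η.ToType, (i : Ordinal) = o :=
  ⟨mk ⟨o, h⟩, by simp⟩

end Ordinal.ToType

section Presentation

variable {μ : Cardinal.{v}}

theorem LtPresented.exists_gens_rels {X P : Type v} [AddCommGroup X] [Module R X]
    [AddCommGroup P] [Module R P] (hP : LtPresented R μ P) (π : X →ₗ[R] P)
    (hπ : Function.Surjective π) :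
    ∃ A B : Set X, #A < μ ∧ #B < μ ∧ Submodule.span R A ⊔ LinearMap.ker π = ⊤ ∧
      B ⊆ LinearMap.ker π ∧ Submodule.span R A ⊓ LinearMap.ker π ≤ Submodule.span R B := by
  obtain ⟨s, hs, hspan, t, ht, hker⟩ := hP
  choose c hc using fun p : s => hπ p
  set φ := Finsupp.linearCombination R c
  have hπφ : π ∘ₗ φ = Finsupp.linearCombination R ((↑) : s → P) := by
    ext p; simp [φ, hc]
  have hφ_mem_ker : ∀ σ, φ σ ∈ LinearMap.ker π ↔ σ ∈ Submodule.span R t := by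
    intro σ
    rw [hker, LinearMap.mem_ker, LinearMap.mem_ker, ← hπφ, LinearMap.comp_apply]
  refine ⟨Set.range c, φ '' t, Cardinal.mk_range_le.trans_lt hs, ?_, ?_, ?_, ?_⟩
  · have himage : Cardinal.lift.{max u v} #(φ '' t) ≤ Cardinal.lift.{v} #t :=
      Cardinal.mk_image_le_lift
    have ht' : Cardinal.lift.{v} #t < Cardinal.lift.{v} (Cardinal.lift.{u} μ) :=
      Cardinal.lift_lt.2 ht
    rw [Cardinal.lift_lift] at ht'
    exact Cardinal.lift_lt.1 (himage.trans_lt ht')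
  · refine eq_top_iff.2 fun x _ => ?_
    obtain ⟨σ, hσ⟩ : π x ∈ LinearMap.range (Finsupp.linearCombination R ((↑) : s → P)) := by
      rw [Finsupp.range_linearCombination, Subtype.range_coe, hspan]; trivial
    have hdiff : x - φ σ ∈ LinearMap.ker π := by
      rw [LinearMap.mem_ker, map_sub, ← LinearMap.comp_apply, hπφ, hσ, sub_self]
    rw [← sub_add_cancel x (φ σ), add_comm]
    refine Submodule.add_mem_sup ?_ hdiff
    rw [← Finsupp.range_linearCombination]
    exact LinearMap.mem_range_self φ σ
  · rintro _ ⟨σ, hσ, rfl⟩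
    exact (hφ_mem_ker σ).2 (Submodule.subset_span hσ)
  · rintro x ⟨hxA, hxK⟩
    rw [SetLike.mem_coe, ← Finsupp.range_linearCombination] at hxA
    obtain ⟨σ, rfl⟩ := hxA
    rw [← Submodule.map_span]
    exact Submodule.mem_map_of_mem ((hφ_mem_ker σ).1 hxK)

theorem LtPresented.exists_gens_rels_of_subQuot {M : Type v} [AddCommGroup M] [Module R M]
    {N N' : Submodule R M} (hle : N ≤ N') {P : Type v} [AddCommGroup P] [Module R P]
    (hP : LtPresented R μ P) (e : SubQuot R N N' ≃ₗ[R] P) :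
    ∃ A B : Set M, #A < μ ∧ #B < μ ∧ N' = Submodule.span R A ⊔ N ∧ B ⊆ N ∧
      Submodule.span R A ⊓ N ≤ Submodule.span R B := by
  set K := N.comap N'.subtype
  set π : N' →ₗ[R] P := e.toLinearMap ∘ₗ K.mkQ
  have hK : LinearMap.ker π = K := by
    rw [LinearEquiv.ker_comp, Submodule.ker_mkQ]
  obtain ⟨A, B, hA, hB, hsup, hBK, hinf⟩ :=
    hP.exists_gens_rels π (e.surjective.comp K.mkQ_surjective)
  rw [hK] at hsup hBK hinf
  have hN : K.map N'.subtype = N := by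
    rw [Submodule.map_comap_subtype, inf_eq_right.2 hle]
  refine ⟨N'.subtype '' A, N'.subtype '' B, Cardinal.mk_image_le.trans_lt hA,
    Cardinal.mk_image_le.trans_lt hB, ?_, ?_, ?_⟩
  · rw [← Submodule.map_span, ← hN, ← Submodule.map_sup, hsup, Submodule.map_subtype_top]
  · rintro _ ⟨b, hb, rfl⟩
    exact hBK hb
  · rw [← Submodule.map_span, ← Submodule.map_span, ← hN,
      ← Submodule.map_inf _ N'.injective_subtype]
    exact Submodule.map_mono hinf

end Presentation

section Enumeration

variable {X : Type v} (deps : X → Set X)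

def depLevel (x : X) : ℕ → Set X
  | 0 => {x}
  | n + 1 => ⋃ y ∈ depLevel x n, deps y

def depClosure (x : X) : Set X :=
  ⋃ n, depLevel deps x n

variable {deps} {μ : Cardinal.{v}}

theorem mem_depClosure_self (x : X) : x ∈ depClosure deps x :=
  Set.mem_iUnion.2 ⟨0, rfl⟩

theorem deps_subset_depClosure {x y : X} (hy : y ∈ depClosure deps x) :
    deps y ⊆ depClosure deps x := by
  obtain ⟨n, hn⟩ := Set.mem_iUnion.1 hy
  exact fun z hz => Set.mem_iUnion.2 ⟨n + 1, Set.mem_biUnion hn hz⟩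

theorem mk_depClosure_lt (hμ : μ.IsRegular) (hunc : ℵ₀ < μ) (hdeps : ∀ x, #(deps x) < μ)
    (x : X) : #(depClosure deps x) < μ := by
  have hlevel : ∀ n, #(depLevel deps x n) < μ := by
    intro n
    induction n with
    | zero => exact (Cardinal.mk_singleton x).trans_lt (Cardinal.one_lt_aleph0.trans hunc)
    | succ n ih =>
      exact (Cardinal.card_biUnion_lt_iff_forall_of_isRegular hμ ih).2 fun y _ => hdeps y
  have h := (Cardinal.mk_iUnion_le_sum_mk_lift (f := depLevel deps x)).trans_lt
    (Cardinal.sum_lt_lift_of_isRegular hμ (by simpa using hunc) fun n => by simpa using hlevel n)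
  simpa [depClosure] using h

theorem exists_enum_le_ord_of_mk_lt {T : Type v} (r : T → T → Prop) [IsWellOrder T r]
    (h : ∀ t, #{s // r s t} < μ) :
    ∃ ℓ ≤ μ.ord, ∃ pos : T → Ordinal.{v}, (∀ s t, r s t → pos s < pos t) ∧
      Function.Injective pos ∧ Set.range pos = Set.Iio ℓ := by
  refine ⟨Ordinal.type r, ?_, Ordinal.typein r, fun s t hst => (Ordinal.typein_lt_typein r).2 hst,
    Ordinal.typein_injective r, Set.ext fun o => Ordinal.mem_range_typein_iff r⟩
  by_contra! hlt
  obtain ⟨t, ht⟩ := Ordinal.typein_surj r hlt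
  have := h t
  rw [← Ordinal.card_typein, ht, Cardinal.card_ord] at this
  exact this.false

theorem exists_depClosed_rank (hμ : μ.IsRegular) (hunc : ℵ₀ < μ) (hdeps : ∀ x, #(deps x) < μ)
    {Z : Set X} (hZ : #Z ≤ μ) :
    ∃ T : Set X, Z ⊆ T ∧ ∃ k : T → μ.ord.ToType,
      (∀ t : T, ∀ y ∈ deps t, ∃ s : T, (s : X) = y ∧ k s ≤ k t) ∧
      ∀ t, #{s // k s ≤ k t} < μ := by
  have hW : #μ.ord.ToType = μ := by rw [Cardinal.mk_toType, Cardinal.card_ord]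
  obtain ⟨f⟩ : Nonempty (Z ↪ μ.ord.ToType) := by rwa [← Cardinal.le_def, hW]
  set T := ⋃ z : Z, depClosure deps z
  have hT : ∀ t : T, {w | ∃ z, f z = w ∧ (t : X) ∈ depClosure deps z}.Nonempty := fun t => by
    obtain ⟨z, hz⟩ := Set.mem_iUnion.1 t.2
    exact ⟨f z, z, rfl, hz⟩
  let k : T → μ.ord.ToType := fun t => wellFounded_lt.min _ (hT t)
  have hk_spec : ∀ t, ∃ z, f z = k t ∧ (t : X) ∈ depClosure deps z :=
    fun t => wellFounded_lt.min_mem _ (hT t)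
  have hk_le : ∀ (t : T) (z : Z), (t : X) ∈ depClosure deps z → k t ≤ f z :=
    fun t z h => wellFounded_lt.min_le
      (s := {w | ∃ z, f z = w ∧ (t : X) ∈ depClosure deps z}) ⟨z, rfl, h⟩
  refine ⟨T, fun z hz => Set.mem_iUnion.2 ⟨⟨z, hz⟩, mem_depClosure_self _⟩, k,
    fun t y hy => ?_, fun t => ?_⟩
  · obtain ⟨z, hz, ht⟩ := hk_spec t
    have hyz := deps_subset_depClosure ht hy
    exact ⟨⟨y, Set.mem_iUnion.2 ⟨z, hyz⟩⟩, rfl, hz ▸ hk_le _ z hyz⟩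
  · have hsub : Subtype.val '' {s | k s ≤ k t} ⊆
        ⋃ z ∈ f ⁻¹' Set.Iic (k t), depClosure deps z := by
      rintro _ ⟨s, hs, rfl⟩
      obtain ⟨z, hz, hsz⟩ := hk_spec s
      exact Set.mem_biUnion (show f z ≤ k t from hz ▸ hs) hsz
    have hIic : #(f ⁻¹' Set.Iic (k t)) < μ :=
      (Cardinal.mk_preimage_of_injective _ _ f.injective).trans_lt <|
        (Cardinal.mk_Iic_lt (k t) (by rw [hW, Ordinal.type_toType])
          (by rw [hW]; exact hμ.aleph0_le)).trans_eq hW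
    refine ((Cardinal.mk_image_eq (s := {s | k s ≤ k t}) Subtype.val_injective).symm.trans_le
      (Cardinal.mk_le_mk_of_subset hsub)).trans_lt ?_
    exact (Cardinal.card_biUnion_lt_iff_forall_of_isRegular hμ hIic).2
      fun z _ => mk_depClosure_lt hμ hunc hdeps z

theorem exists_deps_enumeration [LinearOrder X] [WellFoundedLT X] (hμ : μ.IsRegular)
    (hunc : ℵ₀ < μ) (hlt : ∀ x, ∀ y ∈ deps x, y < x) (hdeps : ∀ x, #(deps x) < μ)
    {Z : Set X} (hZ : #Z ≤ μ) :
    ∃ T : Set X, Z ⊆ T ∧ ∃ ℓ ≤ μ.ord, ∃ pos : T → Ordinal.{v}, Function.Injective pos ∧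
      Set.range pos = Set.Iio ℓ ∧ ∀ t : T, ∀ y ∈ deps t, ∃ s : T, (s : X) = y ∧ pos s < pos t := by
  obtain ⟨T, hZT, k, hk_deps, hk_small⟩ := exists_depClosed_rank hμ hunc hdeps hZ
  let key : T → μ.ord.ToType ×ₗ X := fun t => toLex (k t, (t : X))
  have hkey : Function.Injective key :=
    fun s t h => Subtype.ext (congrArg (fun p => (ofLex p).2) h)
  let r : T → T → Prop := fun s t => key s < key t
  have : IsWellOrder T r := (RelEmbedding.preimage ⟨key, hkey⟩ (· < ·)).isWellOrder
  have hsmall : ∀ t, #{s // r s t} < μ := fun t =>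
    (Cardinal.mk_subtype_mono fun s (hs : key s < key t) =>
      Prod.Lex.monotone_fst (key s) (key t) hs.le).trans_lt (hk_small t)
  obtain ⟨ℓ, hℓ, pos, hpos, hinj, hrange⟩ := exists_enum_le_ord_of_mk_lt r hsmall
  refine ⟨T, hZT, ℓ, hℓ, pos, hinj, hrange, fun t y hy => ?_⟩
  obtain ⟨s, rfl, hks⟩ := hk_deps t y hy
  exact ⟨s, rfl, hpos s t (Prod.Lex.toLex_strictMono (Prod.mk_lt_mk_of_le_of_lt hks (hlt t s hy)))⟩

end Enumeration

section Stages

variable {X : Type*} {T : Set X} (pos : T → Ordinal.{v})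

def enumStage (ξ : Ordinal.{v}) : Set X :=
  (↑) '' (pos ⁻¹' Set.Iio ξ)

variable {pos}

@[simp]
theorem enumStage_zero : enumStage pos 0 = ∅ := by
  simp [enumStage]

theorem enumStage_mono : Monotone (enumStage pos) :=
  fun _ _ h => Set.image_mono (Set.preimage_mono (Set.Iio_subset_Iio h))

theorem enumStage_eq_iUnion_of_isSuccLimit {ξ : Ordinal.{v}} (hξ : Order.IsSuccLimit ξ) :
    enumStage pos ξ = ⋃ ζ : {ζ // ζ < ξ}, enumStage pos ζ.1 := by
  refine subset_antisymm ?_ (Set.iUnion_subset fun ζ => enumStage_mono ζ.2.le)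
  rintro _ ⟨t, ht, rfl⟩
  exact Set.mem_iUnion.2 ⟨⟨pos t + 1, hξ.add_one_lt ht⟩, t,
    show pos t < pos t + 1 from lt_add_one _, rfl⟩

theorem enumStage_add_one (hinj : Function.Injective pos) (t : T) :
    enumStage pos (pos t + 1) = insert ↑t (enumStage pos (pos t)) := by
  ext x
  simp only [enumStage, Set.mem_image, Set.mem_preimage, Set.mem_Iio, Set.mem_insert_iff,
    Order.lt_add_one_iff]
  constructor
  · rintro ⟨s, hs, rfl⟩
    rcases hs.eq_or_lt with h | h
    exacts [Or.inl (congrArg _ (hinj h)), Or.inr ⟨s, h, rfl⟩]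
  · rintro (rfl | ⟨s, hs, rfl⟩)
    exacts [⟨t, le_rfl, rfl⟩, ⟨s, hs.le, rfl⟩]

theorem coe_notMem_enumStage (t : T) : (t : X) ∉ enumStage pos (pos t) := by
  rintro ⟨s, hs, hst⟩
  rw [Subtype.ext hst] at hs
  exact lt_irrefl (pos t) hs

theorem enumStage_eq_of_range_eq {ℓ : Ordinal.{v}} (hrange : Set.range pos = Set.Iio ℓ) :
    enumStage pos ℓ = T := by
  refine subset_antisymm (Set.image_subset_iff.2 fun t _ => t.2) fun x hx => ?_
  exact ⟨⟨x, hx⟩, hrange ▸ Set.mem_range_self _, rfl⟩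

variable {deps : X → Set X}

theorem deps_subset_enumStage
    (hdeps : ∀ t : T, ∀ y ∈ deps t, ∃ s : T, (s : X) = y ∧ pos s < pos t) (t : T) :
    deps t ⊆ enumStage pos (pos t) := by
  intro y hy
  obtain ⟨s, rfl, hs⟩ := hdeps t y hy
  exact ⟨s, hs, rfl⟩

theorem deps_subset_enumStage_of_mem
    (hdeps : ∀ t : T, ∀ y ∈ deps t, ∃ s : T, (s : X) = y ∧ pos s < pos t) (ξ : Ordinal.{v}) :
    ∀ x ∈ enumStage pos ξ, deps x ⊆ enumStage pos ξ := by
  rintro _ ⟨t, ht, rfl⟩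
  exact (deps_subset_enumStage hdeps t).trans (enumStage_mono ht.le)

end Stages

theorem mk_enumStage_lt {X : Type v} {T : Set X} {pos : T → Ordinal.{v}}
    (hinj : Function.Injective pos) {μ : Cardinal.{v}} {ξ : Ordinal.{v}} (hξ : ξ < μ.ord) :
    #(enumStage pos ξ) < μ := by
  have h := Cardinal.mk_preimage_of_injective_lift pos (Set.Iio ξ) hinj
  rw [Cardinal.mk_Iio_ordinal, Cardinal.lift_lift] at h
  exact Cardinal.mk_image_le.trans_lt ((Cardinal.lift_le.1 h).trans_lt (Cardinal.lt_ord.1 hξ))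

section Hill

variable {C : Set (ModuleCat.{v} R)} {M : Type v} [AddCommGroup M] [Module R M]
  {F : Ordinal.{v} → Submodule R M} {η : Ordinal.{v}}

open Submodule (span)
open Ordinal.ToType (coe_lt coe_lt_coe coe_le_coe)

namespace IsCFiltration

variable {A : η.ToType → Set M}

theorem span_le_of_succ_eq (hF : IsCFiltration R C η F)
    (hA : ∀ i : η.ToType, F (i + 1) = span R (A i) ⊔ F i) {i : η.ToType} {γ : Ordinal.{v}}
    (hi : (i : Ordinal) < γ) (hγ : γ ≤ η) : span R (A i) ≤ F γ :=
  calc span R (A i) ≤ F (i + 1) := (hA i).symm ▸ le_sup_left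
    _ ≤ F γ := hF.mono _ _ (Order.add_one_le_of_lt hi) hγ

theorem eq_blockSpan (hF : IsCFiltration R C η F)
    (hA : ∀ i : η.ToType, F (i + 1) = span R (A i) ⊔ F i) {γ : Ordinal.{v}} (hγ : γ ≤ η) :
    F γ = blockSpan R A {i | (i : Ordinal) < γ} := by
  refine le_antisymm ?_ (blockSpan_le_iff.2 fun i hi => hF.span_le_of_succ_eq hA hi hγ)
  induction γ using Ordinal.limitRecOn with
  | zero => simp [hF.bot]
  | add_one δ ih =>
    have hδ : δ < η := Order.add_one_le_iff.1 hγ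
    obtain ⟨i, rfl⟩ := Ordinal.ToType.exists_coe_eq hδ
    rw [hA i]
    refine sup_le (span_le_blockSpan (show (i : Ordinal) < i + 1 from lt_add_one _))
      ((ih hδ.le).trans (blockSpan_mono fun j (hj : (j : Ordinal) < i) => ?_))
    exact hj.trans (lt_add_one _)
  | limit γ hlim ih =>
    rw [hF.continuous γ hγ hlim]
    refine iSup_le fun j => (ih j.1 j.2 (j.2.le.trans hγ)).trans (blockSpan_mono ?_)
    exact fun i (hi : (i : Ordinal) < j.1) => hi.trans j.2

end IsCFiltration

/-- The input of Hill's lemma for `F`: the relations of step `i` live on the steps `deps i`. -/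
structure HillData (F : Ordinal.{v} → Submodule R M) (η : Ordinal.{v}) where
  gens : η.ToType → Set M
  deps : η.ToType → Set η.ToType
  deps_lt : ∀ i, ∀ j ∈ deps i, j < i
  succ_eq : ∀ i : η.ToType, F (i + 1) = span R (gens i) ⊔ F i
  inf_le : ∀ i : η.ToType, span R (gens i) ⊓ F i ≤ blockSpan R gens (deps i)

theorem IsCFiltration.exists_hillData (hF : IsCFiltration R C η F) {μ : Cardinal.{v}}
    (hC : ∀ P ∈ C, LtPresented R μ P) (hμ : ℵ₀ < μ) :
    ∃ H : HillData F η, (∀ i, #(H.gens i) < μ) ∧ ∀ i, #(H.deps i) < μ := by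
  have hstep : ∀ i : η.ToType, ∃ A B : Set M, #A < μ ∧ #B < μ ∧
      F (i + 1) = span R A ⊔ F i ∧ B ⊆ F i ∧ span R A ⊓ F i ≤ span R B := by
    intro i
    have hi : (i : Ordinal) + 1 ≤ η := Order.add_one_le_of_lt (coe_lt i)
    obtain ⟨P, hPC, ⟨e⟩⟩ := hF.quot i hi
    exact (hC P hPC).exists_gens_rels_of_subQuot (hF.mono _ _ le_self_add hi) e
  choose A B hA hB hsucc hBF hinf using hstep
  have hdeps : ∀ i, ∃ D ⊆ Set.Iio i, #D < μ ∧ B i ⊆ blockSpan R A D := by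
    intro i
    have hBi : B i ⊆ blockSpan R A (Set.Iio i) := by
      have hIio : {j : η.ToType | (j : Ordinal) < i} = Set.Iio i := Set.ext fun j => coe_lt_coe
      rw [← hIio, ← hF.eq_blockSpan hsucc (coe_lt i).le]
      exact hBF i
    obtain ⟨D, hDi, hcard, hBD⟩ := exists_subset_mk_le_of_subset_blockSpan hBi
    exact ⟨D, hDi, hcard.trans_lt (Cardinal.mul_lt_of_lt hμ.le (hB i) hμ), hBD⟩
  choose D hDi hD hBD using hdeps
  exact ⟨⟨A, D, fun i j hj => hDi i hj, hsucc,
    fun i => (hinf i).trans (Submodule.span_le.2 (hBD i))⟩, hA, hD⟩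

namespace HillData

variable (H : HillData F η) {U : Set η.ToType}

theorem blockSpan_inf_le (hF : IsCFiltration R C η F) (hU : ∀ i ∈ U, H.deps i ⊆ U)
    (γ : Ordinal.{v}) :
    blockSpan R H.gens U ⊓ F γ ≤ blockSpan R H.gens (U ∩ {i | (i : Ordinal) < γ}) := by
  suffices key : ∀ β : Ordinal.{v}, ∀ x ∈ blockSpan R H.gens (U ∩ {i | (i : Ordinal) < β}),
      x ∈ F γ → x ∈ blockSpan R H.gens (U ∩ {i | (i : Ordinal) < γ}) by
    rintro x ⟨hxU, hxF⟩
    refine key η x (blockSpan_mono ?_ hxU) hxF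
    exact fun i hi => ⟨hi, coe_lt i⟩
  intro β
  induction β using WellFoundedLT.induction with | _ β ih => ?_
  intro x hx hxF
  obtain ⟨W, hWsub, hWfin, hxW⟩ := exists_finite_of_mem_blockSpan hx
  rcases W.eq_empty_or_nonempty with rfl | hWne
  · rw [blockSpan_empty, Submodule.mem_bot] at hxW
    exact hxW ▸ zero_mem _
  obtain ⟨m, hmW, hmax⟩ := Set.exists_max_image W id hWfin hWne
  obtain ⟨hmU, hmβ⟩ := hWsub hmW
  by_cases hmγ : (m : Ordinal) < γ
  · refine blockSpan_mono ?_ hxW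
    exact fun j hj => ⟨(hWsub hj).1, (coe_le_coe.2 (hmax j hj)).trans_lt hmγ⟩
  -- The last step `m` is not below `γ`, so `x = a + y` with `a` from step `m` lies in `F m`;
  -- then `a ∈ span (gens m) ⊓ F m` only involves `deps m`, and `x` is supported below `m`.
  have hWm : W ⊆ insert m (W ∩ Set.Iio m) := by
    intro j hj
    rcases (hmax j hj).eq_or_lt with h | h
    exacts [Or.inl h, Or.inr ⟨hj, h⟩]
  obtain ⟨a, ha, y, hy, rfl⟩ := Submodule.mem_sup.1
    ((blockSpan_insert m).le (blockSpan_mono hWm hxW))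
  have hyF : y ∈ F m := blockSpan_le_iff.2
    (fun j hj => hF.span_le_of_succ_eq H.succ_eq (coe_lt_coe.2 hj.2) (coe_lt m).le) hy
  have haF : a ∈ F m := by
    simpa only [add_sub_cancel_right] using
      sub_mem (hF.mono γ m (not_lt.1 hmγ) (coe_lt m).le hxF) hyF
  have hbelow : ∀ S ⊆ U, (∀ j ∈ S, j < m) →
      blockSpan R H.gens S ≤ blockSpan R H.gens (U ∩ {i | (i : Ordinal) < m}) :=
    fun S hSU hSm => blockSpan_mono fun j hj => ⟨hSU hj, coe_lt_coe.2 (hSm j hj)⟩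
  refine ih m hmβ (a + y) (add_mem ?_ ?_) hxF
  · exact hbelow _ (hU m hmU) (H.deps_lt m) (H.inf_le m ⟨ha, haF⟩)
  · exact hbelow _ (fun j hj => (hWsub hj.1).1) (fun j hj => hj.2) hy

theorem span_gens_inf_blockSpan (hF : IsCFiltration R C η F) (hU : ∀ i ∈ U, H.deps i ⊆ U)
    {α : η.ToType} (hαU : α ∉ U) (hdeps : H.deps α ⊆ U) :
    span R (H.gens α) ⊓ blockSpan R H.gens U = span R (H.gens α) ⊓ F α := by
  refine le_antisymm (le_inf inf_le_left ?_)
    (le_inf inf_le_left ((H.inf_le α).trans (blockSpan_mono hdeps)))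
  have hα : (α : Ordinal) + 1 ≤ η := Order.add_one_le_of_lt (coe_lt α)
  calc span R (H.gens α) ⊓ blockSpan R H.gens U ≤ blockSpan R H.gens U ⊓ F (α + 1) :=
        inf_comm (span R (H.gens α)) _ ▸
          inf_le_inf_left _ (hF.span_le_of_succ_eq H.succ_eq (lt_add_one _) hα)
    _ ≤ blockSpan R H.gens (U ∩ {i | (i : Ordinal) < α + 1}) := H.blockSpan_inf_le hF hU _
    _ ≤ F α := blockSpan_le_iff.2 fun i ⟨hiU, hi⟩ =>
        hF.span_le_of_succ_eq H.succ_eq (coe_lt_coe.2 <|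
          (coe_le_coe.1 (Order.lt_add_one_iff.1 hi)).lt_of_ne (ne_of_mem_of_not_mem hiU hαU))
          (coe_lt α).le

theorem isCFiltration_blockSpan_enumStage (hF : IsCFiltration R C η F) {T : Set η.ToType}
    {ℓ : Ordinal.{v}} {pos : T → Ordinal.{v}} (hinj : Function.Injective pos)
    (hrange : Set.range pos = Set.Iio ℓ)
    (hdeps : ∀ t : T, ∀ y ∈ H.deps t, ∃ s : T, (s : η.ToType) = y ∧ pos s < pos t)
    (htop : blockSpan R H.gens T = ⊤) :
    IsCFiltration R C ℓ fun ξ => blockSpan R H.gens (enumStage pos ξ) where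
  bot := by simp
  top := by rw [enumStage_eq_of_range_eq hrange, htop]
  mono _ _ hij _ := blockSpan_mono (enumStage_mono hij)
  continuous _ _ hξ := by rw [enumStage_eq_iUnion_of_isSuccLimit hξ, blockSpan_iUnion]
  quot ξ hξ := by
    obtain ⟨t, rfl⟩ : ξ ∈ Set.range pos := hrange ▸ Order.add_one_le_iff.1 hξ
    obtain ⟨P, hPC, ⟨e⟩⟩ := hF.quot (t : η.ToType) (Order.add_one_le_of_lt (coe_lt _))
    refine ⟨P, hPC, ⟨(subQuotEquivOfInfEq (q := span R (H.gens t)) ?_ (H.succ_eq t) ?_).trans e⟩⟩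
    · rw [enumStage_add_one hinj, blockSpan_insert]
    · exact H.span_gens_inf_blockSpan hF (deps_subset_enumStage_of_mem hdeps _)
        (coe_notMem_enumStage t) (deps_subset_enumStage hdeps t)

end HillData

end Hill

/-- If `μ` is regular uncountable, `C` a class of `<μ`-presented modules,
and `M` is a `μ`-generated `C`-filtered module, then `M` admits a `C`-filtration of
length at most `μ` all of whose (proper) entries are `<μ`-generated. -/
theorem cFiltration_of_length_mu (μ : Cardinal.{v}) (hreg : μ.IsRegular) (hunc : ℵ₀ < μ)
    (C : Set (ModuleCat.{v} R)) (hC : ∀ P ∈ C, LtPresented R μ P)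
    (M : Type v) [AddCommGroup M] [Module R M]
    (hgen : ∃ s : Set M, #s ≤ μ ∧ Submodule.span R s = ⊤)
    (hM : IsCFiltered R C M) :
    ∃ (η : Ordinal.{v}) (F : Ordinal.{v} → Submodule R M),
      η ≤ μ.ord ∧ IsCFiltration R C η F ∧
      ∀ i : Ordinal.{v}, i < η → ∃ s : Set M, #s < μ ∧ Submodule.span R s = F i := by
  obtain ⟨s, hs, hspan⟩ := hgen
  obtain ⟨η, F, hF⟩ := hM
  obtain ⟨H, hgens, hdeps⟩ := hF.exists_hillData hC hunc
  have hall : blockSpan R H.gens {i : η.ToType | (i : Ordinal) < η} = ⊤ := by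
    rw [← hF.eq_blockSpan H.succ_eq le_rfl, hF.top]
  obtain ⟨Z, -, hZ, hsZ⟩ :=
    exists_subset_mk_le_of_subset_blockSpan fun x _ => hall ▸ Submodule.mem_top (x := x)
  have hZtop : blockSpan R H.gens Z = ⊤ := top_unique (hspan ▸ Submodule.span_le.2 hsZ)
  have hZμ : #Z ≤ μ :=
    (hZ.trans (mul_le_mul' hs hunc.le)).trans_eq (Cardinal.mul_eq_self hreg.aleph0_le)
  obtain ⟨T, hZT, ℓ, hℓ, pos, hinj, hrange, hpos⟩ :=
    exists_deps_enumeration hreg hunc H.deps_lt hdeps hZμ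
  refine ⟨ℓ, _, hℓ, H.isCFiltration_blockSpan_enumStage hF hinj hrange hpos
    (top_unique (hZtop ▸ blockSpan_mono hZT)), fun ξ hξ => ⟨_, ?_, rfl⟩⟩
  exact (Cardinal.card_biUnion_lt_iff_forall_of_isRegular hreg
    (mk_enumStage_lt hinj (hξ.trans_le hℓ))).2 fun i _ => hgens i
end

section
/- For modules Z ⊂ Z', the following are equivalent: (1) Z and Z'/Z are projective; (2) there is a dual basis D for Z that conservatively extends to a dual basis D' for Z' (meaning D' extends D and sprt_D(z) = sprt_{D'}(z) for all z ∈ Z); (3) Z is projective and every dual basis for Z conservatively extends to a dual basis for Z'. -/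
universe u v

/-- A dual basis for an `R`-module `N`: a set `B ⊆ N` together with linear functionals
`f_b : N → R` such that every `x ∈ N` has finite support `{b ∈ B : f_b x ≠ 0}` and
`x = Σ_{b} f_b(x) • b`. -/
structure DualBasis (R : Type u) [Ring R] (N : Type v) [AddCommGroup N]
    [Module R N] where
  B : Set N
  f : B → (N →ₗ[R] R)
  finite : ∀ x : N, {b : B | f b x ≠ 0}.Finite
  sum : ∀ x : N, x = ∑ᶠ b : B, f b x • (b : N)

variable {R : Type u} [Ring R] {N : Type v} [AddCommGroup N] [Module R N]

noncomputable def DualBasis.rep (D : DualBasis R N) : N →ₗ[R] (D.B →₀ R) where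
  toFun x := ⟨(D.finite x).toFinset, fun b => D.f b x, fun b => by simp⟩
  map_add' x y := by ext b; simp
  map_smul' r x := by ext b; simp

@[simp] lemma DualBasis.rep_apply (D : DualBasis R N) (x : N) (b : D.B) :
    D.rep x b = D.f b x := rfl

theorem DualBasis.projective (D : DualBasis R N) : Module.Projective R N := by
  refine Module.Projective.of_split D.rep
    (Finsupp.linearCombination R (fun b : D.B => (b : N))) ?_
  ext x
  simp only [LinearMap.comp_apply, LinearMap.id_apply]
  rw [Finsupp.linearCombination_apply, Finsupp.sum]
  have h := D.sum x
  rw [finsum_eq_sum_of_support_subset (fun b : D.B => D.f b x • (b : N))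
    (s := (D.rep x).support) ?hsub] at h
  · exact h.symm
  · intro b hb
    simp only [Function.mem_support] at hb
    rw [Finset.mem_coe, Finsupp.mem_support_iff, DualBasis.rep_apply]
    intro h0
    exact hb (by rw [h0, zero_smul])

theorem exists_dualBasis (h : Module.Projective R N) : Nonempty (DualBasis R N) := by
  obtain ⟨s, hs⟩ := Module.projective_def'.mp h
  refine ⟨⟨Set.univ, fun b => Finsupp.lapply (b : N) ∘ₗ s, fun x => ?_, fun x => ?_⟩⟩
  · have : {b : (Set.univ : Set N) | (Finsupp.lapply (b : N) ∘ₗ s) x ≠ 0} =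
        Subtype.val ⁻¹' ((s x).support : Set N) := by
      ext b; simp [Finsupp.lapply]
    rw [this]
    exact (s x).support.finite_toSet.preimage
      (Set.injOn_of_injective Subtype.val_injective)
  · have hx : Finsupp.linearCombination R id (s x) = x := by
      have := congrArg (fun g => g x) hs
      simpa using this
    have h1 : ∑ᶠ b : (Set.univ : Set N), ((Finsupp.lapply (b : N) ∘ₗ s) x) • (b : N)
        = ∑ᶠ n ∈ (Set.univ : Set N), (s x) n • n :=
      finsum_set_coe_eq_finsum_mem (f := fun n : N => (s x) n • n) Set.univ
    rw [h1, finsum_mem_univ]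
    rw [finsum_eq_sum_of_support_subset (fun n : N => (s x) n • n)
      (s := (s x).support) ?hsub]
    · conv_lhs => rw [← hx]
      rw [Finsupp.linearCombination_apply, Finsupp.sum]
      rfl
    · intro n hn
      simp only [Function.mem_support] at hn
      rw [Finset.mem_coe, Finsupp.mem_support_iff]
      intro h0
      exact hn (by rw [h0, zero_smul])

/-- Assemble a linear map from a pointwise-finitely-supported family of functionals
and a family of vectors. -/
noncomputable def finsumLinear {ι : Type*} {M P : Type*} [AddCommGroup M] [Module R M]
    [AddCommGroup P] [Module R P] (φ : ι → (M →ₗ[R] R)) (v : ι → P)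
    (hfin : ∀ x : M, {i | φ i x ≠ 0}.Finite) : M →ₗ[R] P where
  toFun x := ∑ᶠ i, φ i x • v i
  map_add' x y := by
    have hsub : ∀ z : M, (Function.support fun i => φ i z • v i) ⊆ {i | φ i z ≠ 0} := by
      intro z i hi
      simp only [Function.mem_support] at hi
      intro h0; exact hi (by rw [h0, zero_smul] : φ i z • v i = 0)
    rw [← finsum_add_distrib ((hfin x).subset (hsub x)) ((hfin y).subset (hsub y))]
    exact finsum_congr fun i => by rw [map_add, add_smul]
  map_smul' c x := by
    have hsub : (Function.support fun i => φ i x • v i) ⊆ {i | φ i x ≠ 0} := by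
      intro i hi
      simp only [Function.mem_support] at hi
      intro h0; exact hi (by rw [h0, zero_smul] : φ i x • v i = 0)
    simp only [RingHom.id_apply]
    rw [smul_finsum' c ((hfin x).subset hsub)]
    exact finsum_congr fun i => by rw [map_smul, smul_eq_mul, mul_smul]

theorem finsumLinear_apply {ι : Type*} {M P : Type*} [AddCommGroup M] [Module R M]
    [AddCommGroup P] [Module R P] (φ : ι → (M →ₗ[R] R)) (v : ι → P)
    (hfin : ∀ x : M, {i | φ i x ≠ 0}.Finite) (x : M) :
    finsumLinear φ v hfin x = ∑ᶠ i, φ i x • v i := rfl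

/-- `D'`, a dual basis for `Z'`, conservatively extends `D`, a dual basis for the
submodule `Z ≤ Z'`: `B ⊆ B'`, the `f'_b` restrict to the `f_b` on `Z` for `b ∈ B`,
and for every `z ∈ Z` the support of `z` computed in `D'` equals that computed in
`D` (it stays inside `B`). -/
def ConservativelyExtends {R : Type u} [Ring R] {Z' : Type v} [AddCommGroup Z']
    [Module R Z'] {Z : Submodule R Z'} (D : DualBasis R Z) (D' : DualBasis R Z') :
    Prop :=
  (∀ b : D.B, ∃ hb : ((b : Z) : Z') ∈ D'.B,
    ∀ z : Z, D'.f ⟨((b : Z) : Z'), hb⟩ (z : Z') = D.f b z) ∧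
  (∀ z : Z, ∀ b' : D'.B, D'.f b' (z : Z') ≠ 0 →
    ∃ b : D.B, D.f b z ≠ 0 ∧ ((b : Z) : Z') = (b' : Z'))

section Retraction
variable {Z' : Type v} [AddCommGroup Z'] [Module R Z'] {Z : Submodule R Z'}

theorem ConservativelyExtends.quotient_projective {D : DualBasis R Z}
    {D' : DualBasis R Z'} (h : ConservativelyExtends D D') :
    Module.Projective R (Z' ⧸ Z) := by
  have hZ' : Module.Projective R Z' := D'.projective
  let e : D.B → D'.B := fun b => ⟨((b : Z) : Z'), (h.1 b).choose⟩
  let φ : D.B → (Z' →ₗ[R] R) := fun b => D'.f (e b)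
  have hφz : ∀ (b : D.B) (z : Z), φ b (z : Z') = D.f b z := fun b => (h.1 b).choose_spec
  have hfin : ∀ x : Z', {b : D.B | φ b x ≠ 0}.Finite := by
    intro x
    have hinj : Function.Injective e := by
      intro a b hab
      apply Subtype.ext; apply Subtype.ext
      exact congrArg (fun x : D'.B => (x : Z')) hab
    have heq : {b : D.B | φ b x ≠ 0} = e ⁻¹' {b' : D'.B | D'.f b' x ≠ 0} := rfl
    rw [heq]
    exact (D'.finite x).preimage (Set.injOn_of_injective hinj)
  let r : Z' →ₗ[R] Z := finsumLinear φ (fun b : D.B => (b : Z)) hfin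
  have hrz : ∀ z : Z, r (z : Z') = z := by
    intro z
    have : r (z : Z') = ∑ᶠ b : D.B, φ b (z : Z') • (b : Z) := rfl
    rw [this, finsum_congr fun b : D.B => by rw [hφz b z]]
    exact (D.sum z).symm
  have hker : Z ≤ LinearMap.ker (LinearMap.id - Z.subtype ∘ₗ r) := by
    intro z hz
    rw [LinearMap.mem_ker, LinearMap.sub_apply, LinearMap.id_apply, LinearMap.comp_apply]
    rw [show z = ((⟨z, hz⟩ : Z) : Z') from rfl, hrz ⟨z, hz⟩]
    simp
  let σ : (Z' ⧸ Z) →ₗ[R] Z' := Z.liftQ (LinearMap.id - Z.subtype ∘ₗ r) hker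
  have hsplit : Z.mkQ ∘ₗ σ = LinearMap.id := by
    apply Submodule.linearMap_qext
    ext x
    simp only [LinearMap.comp_apply, Submodule.mkQ_apply, LinearMap.id_apply]
    have : σ (Submodule.Quotient.mk x) = x - ((r x : Z') : Z') := by
      show Z.liftQ _ hker (Submodule.Quotient.mk x) = _
      rw [Submodule.liftQ_apply]
      simp
    rw [this, Submodule.Quotient.mk_sub]
    have h0 : Submodule.Quotient.mk ((r x : Z') : Z') = (0 : Z' ⧸ Z) :=
      (Submodule.Quotient.mk_eq_zero Z).mpr (r x).2
    rw [h0, sub_zero]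
  exact Module.Projective.of_split σ Z.mkQ hsplit

end Retraction

section Construction
variable {Z' : Type v} [AddCommGroup Z'] [Module R Z'] {Z : Submodule R Z'}

open Classical in
/-- The family of functionals for the extended dual basis. -/
noncomputable def extF (D : DualBasis R Z) (E : DualBasis R (Z' ⧸ Z))
    (ρ : Z' →ₗ[R] Z) (y : Z') : Z' →ₗ[R] R :=
  if h : y ∈ Z then
    (if hb : (⟨y, h⟩ : Z) ∈ D.B then (D.f ⟨⟨y, h⟩, hb⟩) ∘ₗ ρ else 0)
  else
    (if hc : Z.mkQ y ∈ E.B then (E.f ⟨Z.mkQ y, hc⟩) ∘ₗ Z.mkQ else 0)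

lemma extF_mem (D : DualBasis R Z) (E : DualBasis R (Z' ⧸ Z)) (ρ : Z' →ₗ[R] Z)
    (b : D.B) : extF D E ρ ((b : Z) : Z') = (D.f b) ∘ₗ ρ := by
  unfold extF
  rw [dif_pos (b : Z).2]
  simp only [Subtype.coe_eta]
  rw [dif_pos b.2]

lemma extF_sigma (D : DualBasis R Z) (E : DualBasis R (Z' ⧸ Z)) (ρ : Z' →ₗ[R] Z)
    {σ : (Z' ⧸ Z) →ₗ[R] Z'} (c : Z' ⧸ Z) (hc : c ∈ E.B) (h1 : σ c ∉ Z)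
    (h2 : Z.mkQ (σ c) = c) : extF D E ρ (σ c) = (E.f ⟨c, hc⟩) ∘ₗ Z.mkQ := by
  unfold extF
  rw [dif_neg h1, h2, dif_pos hc]

theorem exists_conservative_extension (hQ : Module.Projective R (Z' ⧸ Z))
    (D : DualBasis R Z) : ∃ D' : DualBasis R Z', ConservativelyExtends D D' := by
  obtain ⟨E⟩ := exists_dualBasis hQ
  obtain ⟨σ, hσc⟩ := Module.projective_lifting_property Z.mkQ LinearMap.id
    Z.mkQ_surjective
  have hσ : ∀ q : Z' ⧸ Z, Z.mkQ (σ q) = q := by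
    intro q
    have := LinearMap.congr_fun hσc q
    simpa using this
  have hσinj : Function.Injective σ := by
    intro a b hab
    rw [← hσ a, hab, hσ b]
  have hσZ : ∀ c : Z' ⧸ Z, σ c ∈ Z ↔ c = 0 := by
    intro c
    constructor
    · intro hm
      have h0 : Z.mkQ (σ c) = 0 := by
        rw [Submodule.mkQ_apply, Submodule.Quotient.mk_eq_zero]; exact hm
      rwa [hσ c] at h0
    · intro h0
      rw [h0, map_zero]; exact Z.zero_mem
  -- the retraction
  have hmem : ∀ x : Z', ((LinearMap.id : Z' →ₗ[R] Z') - σ ∘ₗ Z.mkQ) x ∈ Z := by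
    intro x
    simp only [LinearMap.sub_apply, LinearMap.id_apply, LinearMap.comp_apply]
    rw [← Submodule.Quotient.mk_eq_zero Z, ← Submodule.mkQ_apply, map_sub]
    simp [hσ]
  let ρ : Z' →ₗ[R] Z :=
    LinearMap.codRestrict Z ((LinearMap.id : Z' →ₗ[R] Z') - σ ∘ₗ Z.mkQ) hmem
  have hρcoe : ∀ x : Z', ((ρ x : Z') : Z') = x - σ (Z.mkQ x) := fun x => rfl
  have hρz : ∀ z : Z, ρ (z : Z') = z := by
    intro z
    apply Subtype.ext
    rw [hρcoe]
    have : Z.mkQ (z : Z') = 0 := by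
      rw [Submodule.mkQ_apply, Submodule.Quotient.mk_eq_zero]; exact z.2
    rw [this, map_zero, sub_zero]
  -- the basis set
  set C : Set (Z' ⧸ Z) := E.B \ {0} with hC
  set B' : Set Z' := (Subtype.val '' D.B) ∪ (σ '' C) with hB'
  have hdisj : Disjoint (Subtype.val '' D.B) (σ '' C) := by
    rw [Set.disjoint_left]
    rintro y ⟨b, _, rfl⟩ ⟨c, hc, hyc⟩
    rw [hC] at hc
    exact hc.2 ((hσZ c).mp (by rw [hyc]; exact b.2))
  -- finiteness of supports
  have hsupp : ∀ x : Z', (B' ∩ {y : Z' | extF D E ρ y x ≠ 0}) ⊆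
      ((fun b : D.B => ((b : Z) : Z')) '' {b : D.B | D.f b (ρ x) ≠ 0}) ∪
      ((fun c : E.B => σ (c : Z' ⧸ Z)) '' {c : E.B | E.f c (Z.mkQ x) ≠ 0}) := by
    intro x y hy
    rw [Set.mem_inter_iff, hB', Set.mem_union] at hy
    obtain ⟨hyB, hyx⟩ := hy
    rw [Set.mem_setOf_eq] at hyx
    rcases hyB with ⟨b, hb, rfl⟩ | ⟨c, hc, rfl⟩
    · left
      rw [show extF D E ρ (b : Z') = (D.f ⟨b, hb⟩) ∘ₗ ρ from extF_mem D E ρ ⟨b, hb⟩] at hyx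
      exact ⟨⟨b, hb⟩, hyx, rfl⟩
    · right
      rw [hC] at hc
      have hnZ : σ c ∉ Z := fun hin => hc.2 ((hσZ c).mp hin)
      rw [extF_sigma D E ρ c hc.1 hnZ (hσ c)] at hyx
      exact ⟨⟨c, hc.1⟩, hyx, rfl⟩
  have hFfin : ∀ x : Z', (B' ∩ {y : Z' | extF D E ρ y x ≠ 0}).Finite := by
    intro x
    exact Set.Finite.subset
      (Set.Finite.union ((D.finite (ρ x)).image _) ((E.finite (Z.mkQ x)).image _))
      (hsupp x)
  -- finiteness for the extended dual basis
  have hfinD' : ∀ x : Z', {b' : B' | extF D E ρ (b' : Z') x ≠ 0}.Finite := by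
    intro x
    have heq : {b' : B' | extF D E ρ (b' : Z') x ≠ 0} =
        Subtype.val ⁻¹' (B' ∩ {y : Z' | extF D E ρ y x ≠ 0}) := by
      ext b'
      simp only [Set.mem_setOf_eq, Set.mem_preimage, Set.mem_inter_iff]
      exact ⟨fun h => ⟨b'.2, h⟩, fun h => h.2⟩
    rw [heq]
    exact (hFfin x).preimage (Set.injOn_of_injective Subtype.val_injective)
  -- support of the summand
  have hsmul : ∀ x : Z', Function.support (fun y : Z' => extF D E ρ y x • y) ⊆
      {y : Z' | extF D E ρ y x ≠ 0} := by
    intro x y hy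
    simp only [Function.mem_support] at hy
    intro h0
    exact hy (by rw [h0, zero_smul])
  -- the sum property
  have hsum : ∀ x : Z', x = ∑ᶠ b' : B', extF D E ρ (b' : Z') x • (b' : Z') := by
    intro x
    have e1 : ∑ᶠ b' : B', extF D E ρ (b' : Z') x • (b' : Z')
        = ∑ᶠ y ∈ B', extF D E ρ y x • y :=
      finsum_set_coe_eq_finsum_mem (f := fun y : Z' => extF D E ρ y x • y) B'
    have hfin1 : ((Subtype.val '' D.B) ∩
        Function.support (fun y : Z' => extF D E ρ y x • y)).Finite := by
      apply (hFfin x).subset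
      rintro y ⟨h1, h2⟩
      exact ⟨by rw [hB']; exact Or.inl h1, hsmul x h2⟩
    have hfin2 : ((σ '' C) ∩
        Function.support (fun y : Z' => extF D E ρ y x • y)).Finite := by
      apply (hFfin x).subset
      rintro y ⟨h1, h2⟩
      exact ⟨by rw [hB']; exact Or.inr h1, hsmul x h2⟩
    have e2 : ∑ᶠ y ∈ B', extF D E ρ y x • y =
        (∑ᶠ y ∈ Subtype.val '' D.B, extF D E ρ y x • y) +
        ∑ᶠ y ∈ σ '' C, extF D E ρ y x • y := by
      rw [hB']
      exact finsum_mem_union' hdisj hfin1 hfin2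
    -- first part equals ↑(ρ x)
    have part1 : ∑ᶠ y ∈ Subtype.val '' D.B, extF D E ρ y x • y = ((ρ x : Z) : Z') := by
      rw [finsum_mem_image (Set.injOn_of_injective Subtype.val_injective)]
      rw [← finsum_set_coe_eq_finsum_mem
        (f := fun b : Z => extF D E ρ (b : Z') x • (b : Z')) D.B]
      have e5 : ∑ᶠ b : D.B, extF D E ρ ((b : Z) : Z') x • ((b : Z) : Z')
          = ∑ᶠ b : D.B, D.f b (ρ x) • ((b : Z) : Z') :=
        finsum_congr fun b => by
          rw [show extF D E ρ ((b : Z) : Z') = (D.f b) ∘ₗ ρ from extF_mem D E ρ b,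
            LinearMap.comp_apply]
      rw [e5]
      have hfin6 : (Function.support fun b : D.B => D.f b (ρ x) • (b : Z)).Finite := by
        apply (D.finite (ρ x)).subset
        intro b hb
        simp only [Function.mem_support] at hb
        intro h0
        exact hb (by rw [h0, zero_smul])
      conv_rhs => rw [D.sum (ρ x)]
      rw [show (((∑ᶠ b : D.B, D.f b (ρ x) • (b : Z)) : Z) : Z')
          = Z.subtype.toAddMonoidHom (∑ᶠ b : D.B, D.f b (ρ x) • (b : Z)) from rfl]
      rw [AddMonoidHom.map_finsum _ hfin6]
      exact finsum_congr fun b => by simp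
    -- second part equals σ (Z.mkQ x)
    have part2 : ∑ᶠ y ∈ σ '' C, extF D E ρ y x • y = σ (Z.mkQ x) := by
      rw [finsum_mem_image (Set.injOn_of_injective hσinj)]
      have f4 : ∑ᶠ c ∈ C, extF D E ρ (σ c) x • σ c
          = ∑ᶠ c ∈ E.B, extF D E ρ (σ c) x • σ c := by
        apply finsum_mem_inter_support_eq
        ext c
        simp only [Set.mem_inter_iff, Function.mem_support, hC, Set.mem_diff,
          Set.mem_singleton_iff]
        constructor
        · rintro ⟨⟨h1, _⟩, h2⟩; exact ⟨h1, h2⟩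
        · rintro ⟨h1, h2⟩
          refine ⟨⟨h1, fun h0 => h2 ?_⟩, h2⟩
          rw [h0, map_zero, smul_zero]
      rw [f4]
      rw [← finsum_set_coe_eq_finsum_mem (f := fun c : Z' ⧸ Z => extF D E ρ (σ c) x • σ c) E.B]
      have f6 : ∑ᶠ c : E.B, extF D E ρ (σ (c : Z' ⧸ Z)) x • σ (c : Z' ⧸ Z)
          = ∑ᶠ c : E.B, E.f c (Z.mkQ x) • σ (c : Z' ⧸ Z) := by
        apply finsum_congr
        intro c
        by_cases h0 : (c : Z' ⧸ Z) = 0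
        · rw [h0, map_zero, smul_zero, smul_zero]
        · have hnZ : σ (c : Z' ⧸ Z) ∉ Z := fun hin => h0 ((hσZ (c : Z' ⧸ Z)).mp hin)
          rw [show extF D E ρ (σ (c : Z' ⧸ Z)) = (E.f ⟨(c : Z' ⧸ Z), c.2⟩) ∘ₗ Z.mkQ from
            extF_sigma D E ρ (c : Z' ⧸ Z) c.2 hnZ (hσ (c : Z' ⧸ Z)), LinearMap.comp_apply]
      rw [f6]
      have hfin7 : (Function.support fun c : E.B =>
          E.f c (Z.mkQ x) • (c : Z' ⧸ Z)).Finite := by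
        apply (E.finite (Z.mkQ x)).subset
        intro c hc
        simp only [Function.mem_support] at hc
        intro h0
        exact hc (by rw [h0, zero_smul])
      conv_rhs => rw [E.sum (Z.mkQ x)]
      rw [show σ (∑ᶠ c : E.B, E.f c (Z.mkQ x) • (c : Z' ⧸ Z))
          = σ.toAddMonoidHom (∑ᶠ c : E.B, E.f c (Z.mkQ x) • (c : Z' ⧸ Z)) from rfl]
      rw [AddMonoidHom.map_finsum _ hfin7]
      exact finsum_congr fun c => by simp
    rw [e1, e2, part1, part2, hρcoe x]
    abel
  -- assemble the dual basis
  refine ⟨⟨B', fun b' => extF D E ρ (b' : Z'), hfinD', hsum⟩, ?_, ?_⟩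
  · intro b
    have hbB : ((b : Z) : Z') ∈ B' := by rw [hB']; exact Or.inl ⟨(b : Z), b.2, rfl⟩
    refine ⟨hbB, fun z => ?_⟩
    show extF D E ρ ((b : Z) : Z') (z : Z') = D.f b z
    rw [show extF D E ρ ((b : Z) : Z') = (D.f b) ∘ₗ ρ from extF_mem D E ρ b,
      LinearMap.comp_apply, hρz z]
  · intro z b' hne
    have hb2 : (b' : Z') ∈ (Subtype.val '' D.B) ∪ (σ '' C) := b'.2
    have hne' : extF D E ρ (b' : Z') (z : Z') ≠ 0 := hne
    rcases hb2 with ⟨b, hb, heq⟩ | ⟨c, hc, heq⟩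
    · rw [← heq] at hne'
      rw [show extF D E ρ (b : Z') = (D.f ⟨b, hb⟩) ∘ₗ ρ from extF_mem D E ρ ⟨b, hb⟩,
        LinearMap.comp_apply, hρz z] at hne'
      exact ⟨⟨b, hb⟩, hne', heq⟩
    · exfalso
      rw [hC] at hc
      have hnZ : σ c ∉ Z := fun hin => hc.2 ((hσZ c).mp hin)
      rw [← heq] at hne'
      rw [extF_sigma D E ρ c hc.1 hnZ (hσ c), LinearMap.comp_apply] at hne'
      apply hne'
      have hz0 : Z.mkQ (z : Z') = 0 := by
        rw [Submodule.mkQ_apply, Submodule.Quotient.mk_eq_zero]; exact z.2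
      rw [hz0, map_zero]

end Construction

/-- For modules `Z ≤ Z'` the following are equivalent:
(1) `Z` and `Z'/Z` are projective;
(2) some dual basis for `Z` conservatively extends to a dual basis for `Z'`;
(3) `Z` is projective and every dual basis for `Z` conservatively extends to a dual
basis for `Z'`. -/
theorem projective_pair_tfae_dualBasis (R : Type u) [Ring R]
    (Z' : Type v) [AddCommGroup Z'] [Module R Z'] (Z : Submodule R Z') :
    List.TFAE
      [Module.Projective R Z ∧ Module.Projective R (Z' ⧸ Z),
       ∃ (D : DualBasis R Z) (D' : DualBasis R Z'), ConservativelyExtends D D',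
       Module.Projective R Z ∧
         ∀ D : DualBasis R Z, ∃ D' : DualBasis R Z', ConservativelyExtends D D'] := by
  tfae_have 1 → 3 := by
    rintro ⟨h1, h2⟩
    exact ⟨h1, fun D => exists_conservative_extension h2 D⟩
  tfae_have 3 → 2 := by
    rintro ⟨h1, h2⟩
    obtain ⟨D⟩ := exists_dualBasis h1
    exact ⟨D, h2 D⟩
  tfae_have 2 → 1 := by
    rintro ⟨D, D', hext⟩
    exact ⟨D.projective, hext.quotient_projective⟩
  tfae_finish
end

section
/- A ring R is (left) hereditary if and only if every left ideal of R is projective as a left R-module. -/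
/-!
Kaplansky's argument. Well-order `ι` and filter a submodule `N ≤ ι →₀ M` by the submodules
`N.truncation i` of its elements supported on `Iic i`. Taking the coefficient at `i` maps
`N.truncation i` onto a submodule `N.leadingCoeffs i` of `M`; when that is projective the map
splits, and the sum of the splittings is an isomorphism `⨁ i, N.leadingCoeffs i ≃ N`: injective
by looking at the largest index of the support, surjective by well-founded induction on it.
A projective module is a direct summand of a free module `P →₀ R`, so when all left ideals are
projective, its submodules are too.
-/

universe u

open DirectSum Set

noncomputable section

namespace Submodule

variable {R M ι : Type*} [Ring R] [AddCommGroup M] [Module R M] [LinearOrder ι]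
  (N : Submodule R (ι →₀ M))

def truncation (i : ι) : Submodule R (ι →₀ M) :=
  N ⊓ Finsupp.supported M R (Iic i)

def leadingCoeff (i : ι) : N.truncation i →ₗ[R] M :=
  Finsupp.lapply i ∘ₗ (N.truncation i).subtype

def leadingCoeffs (i : ι) : Submodule R M :=
  LinearMap.range (N.leadingCoeff i)

variable {N}

theorem apply_eq_zero_of_mem_truncation {i j : ι} {x : ι →₀ M} (hx : x ∈ N.truncation i)
    (hij : i < j) : x j = 0 :=
  (Finsupp.mem_supported' R x).1 hx.2 j (not_le.2 hij)

theorem mem_truncation_max' {x : ι →₀ M} (hx : x ∈ N) (h : x.support.Nonempty) :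
    x ∈ N.truncation (x.support.max' h) :=
  ⟨hx, (Finsupp.mem_supported R x).2 fun k hk => x.support.le_max' k hk⟩

section Sections

variable (σ : ∀ i, N.leadingCoeffs i →ₗ[R] N.truncation i)

def sumSections : (⨁ i, N.leadingCoeffs i) →ₗ[R] ι →₀ M :=
  toModule R ι _ fun i => (N.truncation i).subtype ∘ₗ σ i

theorem sumSections_of (i : ι) (a : N.leadingCoeffs i) :
    sumSections σ (of _ i a) = σ i a := by
  rw [← lof_eq_of R, sumSections, toModule_lof]
  rfl

variable {σ} (hσ : ∀ i a, (σ i a : ι →₀ M) i = a)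
include hσ

theorem sumSections_apply_of_forall_lt {i : ι} {d : ⨁ i, N.leadingCoeffs i}
    (hd : ∀ j, i < j → d j = 0) : sumSections σ d i = d i := by
  classical
  conv_lhs => rw [← sum_support_of d]
  rw [map_sum, Finsupp.finsetSum_apply, Finset.sum_eq_single i]
  · rw [sumSections_of, hσ]
  · intro j hj hji
    rw [sumSections_of]
    have hji : j < i :=
      lt_of_le_of_ne (not_lt.1 fun hij => DFinsupp.mem_support_iff.1 hj (hd j hij)) hji
    exact apply_eq_zero_of_mem_truncation (σ j (d j)).2 hji
  · intro hi
    rw [DFinsupp.notMem_support_iff.1 hi, map_zero, map_zero, Finsupp.coe_zero, Pi.zero_apply]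

theorem sumSections_injective : Function.Injective (sumSections σ) := by
  classical
  rw [injective_iff_map_eq_zero]
  intro d hd
  by_contra hne
  have h : d.support.Nonempty :=
    Finset.nonempty_iff_ne_empty.2 fun h => hne (DFinsupp.support_eq_empty.1 h)
  have hmax := sumSections_apply_of_forall_lt hσ (i := d.support.max' h) fun j hj =>
    DFinsupp.notMem_support_iff.1 fun hj' => not_le.2 hj (d.support.le_max' j hj')
  rw [hd, Finsupp.coe_zero, Pi.zero_apply, eq_comm, ZeroMemClass.coe_eq_zero] at hmax
  exact DFinsupp.mem_support_iff.1 (d.support.max'_mem h) hmax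

theorem range_sumSections [WellFoundedLT ι] : LinearMap.range (sumSections σ) = N := by
  refine le_antisymm ?_ fun x hx => ?_
  · rintro _ ⟨d, rfl⟩
    induction d using DirectSum.induction_on with
    | zero => simp
    | of i a => rw [sumSections_of]; exact (σ i a).2.1
    | add x y hx hy => rw [map_add]; exact N.add_mem hx hy
  suffices ∀ i, ∀ x ∈ N.truncation i, x ∈ LinearMap.range (sumSections σ) by
    rcases eq_or_ne x 0 with rfl | h0
    · exact zero_mem _
    · exact this _ x (mem_truncation_max' hx (Finsupp.support_nonempty_iff.2 h0))
  intro i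
  induction i using WellFoundedLT.induction with
  | _ i IH =>
  intro x hx
  set a : N.leadingCoeffs i := (N.leadingCoeff i).rangeRestrict ⟨x, hx⟩
  set z := x - σ i a with hz
  have hz_mem : z ∈ N.truncation i := sub_mem hx (σ i a).2
  have hzi : z i = 0 := by simp only [hz, Finsupp.sub_apply, hσ]; exact sub_self _
  rw [← sub_add_cancel x (σ i a : ι →₀ M)]
  refine add_mem ?_ ⟨of _ i a, sumSections_of σ i a⟩
  rcases eq_or_ne z 0 with h0 | h0
  · rw [← hz, h0]; exact zero_mem _
  have hzs : z.support.Nonempty := Finsupp.support_nonempty_iff.2 h0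
  have hz_max := Finsupp.mem_support_iff.1 (z.support.max'_mem hzs)
  refine IH _ (lt_of_le_of_ne ?_ ?_) z (mem_truncation_max' hz_mem.1 hzs)
  · exact not_lt.1 fun hlt => hz_max (apply_eq_zero_of_mem_truncation hz_mem hlt)
  · exact fun heq => hz_max (heq ▸ hzi)

end Sections

theorem projective_of_forall_projective_leadingCoeffs [WellFoundedLT ι]
    (h : ∀ i, Module.Projective R (N.leadingCoeffs i)) : Module.Projective R N := by
  choose σ hσ using fun i =>
    have : Module.Projective R (N.leadingCoeff i).range := h i
    Module.projective_lifting_property (N.leadingCoeff i).rangeRestrict LinearMap.id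
      (N.leadingCoeff i).surjective_rangeRestrict
  have hσ' : ∀ i a, (σ i a : ι →₀ M) i = a := fun i a =>
    congrArg Subtype.val (LinearMap.congr_fun (hσ i) a)
  exact .of_equiv ((LinearEquiv.ofInjective _ (sumSections_injective hσ')).trans
    (LinearEquiv.ofEq _ _ (range_sumSections hσ')))

omit [LinearOrder ι] in
theorem projective_of_forall_projective_submodule_of_finsupp
    (h : ∀ L : Submodule R M, Module.Projective R L) (N : Submodule R (ι →₀ M)) :
    Module.Projective R N := by
  obtain ⟨_, _⟩ := exists_wellFoundedLT ι
  exact N.projective_of_forall_projective_leadingCoeffs fun i => h _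

end Submodule

end

/-- A ring `R` is left hereditary (every submodule of a projective left
`R`-module is projective) if and only if every left ideal of `R` is projective as a
left `R`-module. -/
theorem hereditary_iff_ideals_projective (R : Type u) [Ring R] :
    (∀ (P : Type u) [AddCommGroup P] [Module R P], Module.Projective R P →
      ∀ N : Submodule R P, Module.Projective R N) ↔
    (∀ I : Ideal R, Module.Projective R I) := by
  refine ⟨fun h I => h R inferInstance I, fun h P _ _ hP N => ?_⟩
  obtain ⟨s, hs⟩ := Module.projective_def.1 hP
  have := Submodule.projective_of_forall_projective_submodule_of_finsupp h (N.map s)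
  exact .of_equiv (N.equivMapOfInjective s hs.injective).symm
end

section
/- Let μ be a regular cardinal, C a collection of <μ-presented R-modules, and M a μ-generated R-module. If Player 2 has a winning strategy in the C-filtration game of length μ on M, then M is C-filtered. -/
/-!
Player 1 enumerates a generating set of `M` in order type `μ`, one generator per round, and
Player 2 answers with its winning strategy. The spans `N i` of Player 2's moves before round `i`
form a continuous chain from `0` to `M` (every generator is caught by some round), and the
winning condition says exactly that each step `N (i + 1) / N i` is `C`-filtered. Placing the
filtrations of the steps one after the other, step `i` starting at the ordinal sum of the
lengths of the earlier steps, gives a `C`-filtration of `M`.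
-/

universe u v

open Cardinal

variable (R : Type u) [Ring R]

/-- Validity of round `i` of the `C`-filtration game of length `μ` on `M`, where
`X k` is Player 1's move and `Z k` Player 2's move at round `k`: Player 2's move
`Z i` has size `< μ`, its span contains `X i` and all previous moves, and
`⟨Z i⟩ / ⟨⋃_{k<i} Z k⟩` is `C`-filtered. -/
def ValidRound (C : Set (ModuleCat.{v} R)) (μ : Cardinal.{v}) {M : Type v}
    [AddCommGroup M] [Module R M] (X Z : Ordinal.{v} → Set M) (i : Ordinal.{v}) :
    Prop :=
  #(Z i) < μ ∧
  X i ∪ (⋃ k : {k : Ordinal.{v} // k < i}, Z k.1) ⊆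
    (Submodule.span R (Z i) : Set M) ∧
  IsCFiltered R C
    (SubQuot R (Submodule.span R (⋃ k : {k : Ordinal.{v} // k < i}, Z k.1))
      (Submodule.span R (Z i)))

/-- Player 1 has a winning strategy in the `C`-filtration game of length `μ` on `M`:
a function `σ` producing, from Player 2's previous moves, a `<μ`-sized challenge set
(depending only on the moves so far), such that no play of Player 2 survives all
`μ` rounds against `σ`. -/
def P1WinsFiltGame (C : Set (ModuleCat.{v} R)) (μ : Cardinal.{v}) (M : Type v)
    [AddCommGroup M] [Module R M] : Prop :=
  ∃ σ : (Ordinal.{v} → Set M) → Ordinal.{v} → Set M,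
    (∀ Z i, #(σ Z i) < μ) ∧
    (∀ Z Z' i, (∀ k, k < i → Z k = Z' k) → σ Z i = σ Z' i) ∧
    ∀ Z : Ordinal.{v} → Set M,
      ¬ (∀ i, i < μ.ord → ValidRound R C μ (σ Z) Z i)

/-- Player 2 has a winning strategy in the `C`-filtration game of length `μ` on `M`:
a function `τ` producing, from Player 1's challenges so far (the response at round
`i` depends only on the challenges up to round `i`), valid responses at every round
`i < μ` against every legal play of Player 1. -/
def P2WinsFiltGame (C : Set (ModuleCat.{v} R)) (μ : Cardinal.{v}) (M : Type v)
    [AddCommGroup M] [Module R M] : Prop :=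
  ∃ τ : (Ordinal.{v} → Set M) → Ordinal.{v} → Set M,
    (∀ X X' i, (∀ k, k ≤ i → X k = X' k) → τ X i = τ X' i) ∧
    ∀ X : Ordinal.{v} → Set M, (∀ i, i < μ.ord → #(X i) < μ) →
      ∀ i, i < μ.ord → ValidRound R C μ X (τ X) i

open Order

namespace Ordinal

variable {η : Ordinal.{v} → Ordinal.{v}}

/-- The ordinal sum `∑_{k < j} η k`. -/
noncomputable def partialSum (η : Ordinal.{v} → Ordinal.{v}) (j : Ordinal.{v}) : Ordinal.{v} :=
  limitRecOn j 0 (fun k s => s + η k) fun j _ s => ⨆ k : Set.Iio j, s k k.2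

@[simp]
theorem partialSum_zero : partialSum η 0 = 0 :=
  limitRecOn_zero ..

theorem partialSum_add_one (j : Ordinal.{v}) : partialSum η (j + 1) = partialSum η j + η j :=
  limitRecOn_add_one ..

theorem partialSum_of_isSuccLimit {j : Ordinal.{v}} (hj : IsSuccLimit j) :
    partialSum η j = ⨆ k : Set.Iio j, partialSum η k :=
  limitRecOn_limit _ _ _ _ hj

theorem partialSum_mono : Monotone (partialSum η) := by
  intro j i hji
  induction i using limitRecOn with
  | zero => rw [nonpos_iff_eq_zero.1 hji]
  | add_one i ih =>
    rcases hji.lt_or_eq with hji | rfl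
    · exact (ih (lt_add_one_iff.1 hji)).trans (partialSum_add_one i ▸ le_self_add)
    · rfl
  | limit i hi ih =>
    rcases hji.lt_or_eq with hji | rfl
    · rw [partialSum_of_isSuccLimit hi]
      exact Ordinal.le_iSup (fun k : Set.Iio i => partialSum η k) ⟨j, hji⟩
    · rfl

theorem exists_partialSum_block {lam α : Ordinal.{v}} (hα₀ : 0 < α)
    (hα : α ≤ partialSum η lam) :
    (∃ k < lam, partialSum η k < α ∧ α ≤ partialSum η (k + 1)) ∨
      ∃ j ≤ lam, IsSuccLimit j ∧ partialSum η j = α ∧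
        ∀ k < j, partialSum η k < α := by
  set S := {j | α ≤ partialSum η j}
  have hS : S.Nonempty := ⟨lam, hα⟩
  have hbelow : ∀ k < sInf S, partialSum η k < α := fun k hk =>
    lt_of_not_ge fun h => notMem_of_lt_csInf' hk h
  rcases zero_or_succ_or_isSuccLimit (sInf S) with h0 | ⟨k, hk⟩ | hlim
  · exact absurd (h0 ▸ csInf_mem hS : α ≤ partialSum η 0) (by simpa using hα₀.not_ge)
  · left
    rw [succ_eq_add_one] at hk
    exact ⟨k, (lt_add_one k).trans_le (hk ▸ csInf_le' hα), hbelow k (hk ▸ lt_add_one k),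
      hk ▸ csInf_mem hS⟩
  · refine .inr ⟨sInf S, csInf_le' hα, hlim, le_antisymm ?_ (csInf_mem hS), hbelow⟩
    rw [partialSum_of_isSuccLimit hlim]
    exact Ordinal.iSup_le fun k => (hbelow k k.2).le

end Ordinal

section Chain

variable {α : Type*} [CompleteLattice α] {N : Ordinal.{v} → α}

theorem le_sup_iSup_add_one (hmono : Monotone N)
    (hcont : ∀ i, IsSuccLimit i → N i = ⨆ j : {j // j < i}, N j.1) (lam : Ordinal.{v}) :
    N lam ≤ N 0 ⊔ ⨆ k : {k // k < lam}, N (k.1 + 1) := by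
  rcases Ordinal.zero_or_succ_or_isSuccLimit lam with rfl | ⟨k, rfl⟩ | hlim
  · exact le_sup_left
  · rw [succ_eq_add_one]
    exact le_sup_of_le_right (le_iSup_of_le ⟨k, lt_add_one k⟩ le_rfl)
  · rw [hcont lam hlim]
    exact iSup_le fun j => le_sup_of_le_right
      (le_iSup_of_le j (hmono le_self_add))

theorem le_of_partialSum_eq {η : Ordinal.{v} → Ordinal.{v}} (hmono : Monotone N)
    (hcont : ∀ i, IsSuccLimit i → N i = ⨆ j : {j // j < i}, N j.1) {lam : Ordinal.{v}}
    (hη : ∀ k < lam, η k = 0 → N (k + 1) ≤ N k) {i j : Ordinal.{v}} (hi : i ≤ lam)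
    (hji : j ≤ i) (he : Ordinal.partialSum η i = Ordinal.partialSum η j) : N i ≤ N j := by
  induction i using Ordinal.limitRecOn with
  | zero => rw [nonpos_iff_eq_zero.1 hji]
  | add_one i ih =>
    rcases hji.lt_or_eq with hji | rfl
    · have hji := lt_add_one_iff.1 hji
      have hei : Ordinal.partialSum η i = Ordinal.partialSum η j :=
        le_antisymm (he ▸ Ordinal.partialSum_mono le_self_add)
          (Ordinal.partialSum_mono hji)
      have hηi : η i = 0 := by
        rwa [Ordinal.partialSum_add_one, ← hei, _root_.add_eq_left] at he
      exact (hη i ((lt_add_one i).trans_le hi) hηi).trans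
        (ih (le_self_add.trans hi) hji hei)
    · rfl
  | limit i hlim ih =>
    rcases hji.lt_or_eq with hji | rfl
    · rw [hcont i hlim]
      refine iSup_le fun ⟨k, hk⟩ => ?_
      rcases le_total k j with hkj | hjk
      · exact hmono hkj
      · exact ih k hk (hk.le.trans hi) hjk <| le_antisymm
          (he ▸ Ordinal.partialSum_mono hk.le) (Ordinal.partialSum_mono hjk)
    · rfl

end Chain

section LiftSubQuot

variable {R} {M : Type v} [AddCommGroup M] [Module R M]

theorem Submodule.comap_iSup_of_surjective {M₂ : Type*} [AddCommGroup M₂] [Module R M₂]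
    {ι : Sort*} [Nonempty ι] {f : M →ₗ[R] M₂} (hf : Function.Surjective f)
    (S : ι → Submodule R M₂) : (⨆ i, S i).comap f = ⨆ i, (S i).comap f := by
  refine le_antisymm ?_ (iSup_le fun i => comap_mono (le_iSup S i))
  have hS : ⨆ i, S i = (⨆ i, (S i).comap f).map f := by
    simp only [map_iSup, map_comap_eq_of_surjective hf]
  obtain ⟨i⟩ := ‹Nonempty ι›
  rw [hS, comap_map_eq]
  exact sup_le le_rfl <|
    (LinearMap.ker_le_comap (p := S i) f).trans (le_iSup (fun i => (S i).comap f) i)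

theorem nonempty_subQuot_equiv_of_map {M₂ : Type v} [AddCommGroup M₂] [Module R M₂]
    (f : M →ₗ[R] M₂) {A B : Submodule R M} {A' B' : Submodule R M₂} (hB : B.map f = B')
    (hA : ∀ b ∈ B, f b ∈ A' ↔ b ∈ A) :
    Nonempty (SubQuot R A B ≃ₗ[R] SubQuot R A' B') := by
  let φ : B →ₗ[R] SubQuot R A' B' :=
    (A'.comap B'.subtype).mkQ ∘ₗ f.restrict fun b hb => hB ▸ Submodule.mem_map_of_mem hb
  have hφ : Function.Surjective φ := by
    refine (Submodule.mkQ_surjective _).comp ?_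
    rintro ⟨b', hb'⟩
    obtain ⟨b, hb, rfl⟩ := Submodule.mem_map.1 (hB ▸ hb')
    exact ⟨⟨b, hb⟩, rfl⟩
  have hker : A.comap B.subtype = LinearMap.ker φ := by
    ext ⟨b, hb⟩
    simp [φ, Submodule.Quotient.mk_eq_zero, hA b hb]
  exact ⟨(Submodule.quotEquivOfEq _ _ hker).trans (φ.quotKerEquivOfSurjective hφ)⟩

noncomputable def liftSubQuot (N N' : Submodule R M) (G : Submodule R (SubQuot R N N')) :
    Submodule R M :=
  (G.comap (N.comap N'.subtype).mkQ).map N'.subtype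

variable {N N' : Submodule R M}

theorem liftSubQuot_mono : Monotone (liftSubQuot N N') :=
  fun _ _ h => Submodule.map_mono (Submodule.comap_mono h)

theorem liftSubQuot_bot (h : N ≤ N') : liftSubQuot N N' ⊥ = N := by
  rw [liftSubQuot, Submodule.comap_bot, Submodule.ker_mkQ, Submodule.map_comap_subtype,
    inf_eq_right.2 h]

theorem liftSubQuot_top : liftSubQuot N N' ⊤ = N' := by
  rw [liftSubQuot, Submodule.comap_top, Submodule.map_top, Submodule.range_subtype]

theorem liftSubQuot_iSup {ι : Sort*} [Nonempty ι] (G : ι → Submodule R (SubQuot R N N')) :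
    liftSubQuot N N' (⨆ i, G i) = ⨆ i, liftSubQuot N N' (G i) := by
  rw [liftSubQuot, Submodule.comap_iSup_of_surjective (Submodule.mkQ_surjective _),
    Submodule.map_iSup]
  rfl

theorem nonempty_subQuot_liftSubQuot_equiv (G G' : Submodule R (SubQuot R N N')) :
    Nonempty (SubQuot R (liftSubQuot N N' G) (liftSubQuot N N' G') ≃ₗ[R] SubQuot R G G') := by
  let q := (N.comap N'.subtype).mkQ
  obtain ⟨e₁⟩ := nonempty_subQuot_equiv_of_map N'.subtype (A := G.comap q) (B := G'.comap q)
    (A' := liftSubQuot N N' G) rfl fun _ _ => Subtype.val_injective.mem_set_image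
  obtain ⟨e₂⟩ := nonempty_subQuot_equiv_of_map q (A := G.comap q) (B := G'.comap q)
    (Submodule.map_comap_eq_of_surjective (Submodule.mkQ_surjective _) G') fun _ _ => Iff.rfl
  exact ⟨e₁.symm.trans e₂⟩

end LiftSubQuot

section RelFiltration

variable {R} {C : Set (ModuleCat.{v} R)} {M : Type v} [AddCommGroup M] [Module R M]

/-- A `C`-filtration of `N'/N`, read in `M`. -/
structure IsRelCFiltration (C : Set (ModuleCat.{v} R)) (N N' : Submodule R M)
    (η : Ordinal.{v}) (F : Ordinal.{v} → Submodule R M) : Prop where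
  bot : F 0 = N
  top : F η = N'
  mono : ∀ i j : Ordinal.{v}, i ≤ j → j ≤ η → F i ≤ F j
  continuous : ∀ i : Ordinal.{v}, i ≤ η → IsSuccLimit i →
    F i = ⨆ j : {j : Ordinal.{v} // j < i}, F j.1
  quot : ∀ i : Ordinal.{v}, i + 1 ≤ η →
    ∃ P ∈ C, Nonempty ((SubQuot R (F i) (F (i + 1))) ≃ₗ[R] P)

namespace IsRelCFiltration

variable {N N' : Submodule R M} {η γ : Ordinal.{v}} {F : Ordinal.{v} → Submodule R M}

theorem left_le (hF : IsRelCFiltration C N N' η F) (hγ : γ ≤ η) : N ≤ F γ :=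
  hF.bot ▸ hF.mono 0 γ zero_le hγ

theorem le_right (hF : IsRelCFiltration C N N' η F) (hγ : γ ≤ η) : F γ ≤ N' :=
  hF.top ▸ hF.mono γ η hγ le_rfl

theorem isCFiltered (hF : IsRelCFiltration C ⊥ ⊤ η F) : IsCFiltered R C M :=
  ⟨η, F, hF.bot, hF.top, hF.mono, hF.continuous, hF.quot⟩

end IsRelCFiltration

theorem IsCFiltration.isRelCFiltration_liftSubQuot {N N' : Submodule R M} {η : Ordinal.{v}}
    {G : Ordinal.{v} → Submodule R (SubQuot R N N')} (hG : IsCFiltration R C η G)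
    (hNN' : N ≤ N') : IsRelCFiltration C N N' η fun γ => liftSubQuot N N' (G γ) where
  bot := by rw [hG.bot, liftSubQuot_bot hNN']
  top := by rw [hG.top, liftSubQuot_top]
  mono i j hij hj := liftSubQuot_mono (hG.mono i j hij hj)
  continuous i hi hlim := by
    have : Nonempty {j : Ordinal.{v} // j < i} := ⟨⟨0, hlim.bot_lt⟩⟩
    rw [hG.continuous i hi hlim, liftSubQuot_iSup]
  quot i hi := by
    obtain ⟨P, hP, ⟨e⟩⟩ := hG.quot i hi
    obtain ⟨e'⟩ := nonempty_subQuot_liftSubQuot_equiv (G i) (G (i + 1))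
    exact ⟨P, hP, ⟨e'.trans e⟩⟩

theorem IsCFiltered.exists_isRelCFiltration {N N' : Submodule R M}
    (h : IsCFiltered R C (SubQuot R N N')) (hNN' : N ≤ N') :
    ∃ η F, IsRelCFiltration C N N' η F :=
  let ⟨η, _, hG⟩ := h
  ⟨η, _, hG.isRelCFiltration_liftSubQuot hNN'⟩

end RelFiltration

section Concatenation

open Ordinal (partialSum partialSum_mono partialSum_add_one)

variable {R} {C : Set (ModuleCat.{v} R)} {M : Type v} [AddCommGroup M] [Module R M]
  {N : Ordinal.{v} → Submodule R M} {η : Ordinal.{v} → Ordinal.{v}}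
  {L : Ordinal.{v} → Ordinal.{v} → Submodule R M} {lam α : Ordinal.{v}}

/-- The steps of the filtration `L i` of `N (i + 1) / N i` placed one after the other: step `i`
occupies the ordinals from `partialSum η i` to `partialSum η (i + 1)`. -/
noncomputable def concatFiltration (N : Ordinal.{v} → Submodule R M)
    (η : Ordinal.{v} → Ordinal.{v})
    (L : Ordinal.{v} → Ordinal.{v} → Submodule R M) (lam α : Ordinal.{v}) : Submodule R M :=
  N 0 ⊔ ⨆ (i) (γ) (_ : i < lam ∧ γ ≤ η i ∧ partialSum η i + γ ≤ α), L i γ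

theorem le_concatFiltration {i γ : Ordinal.{v}} (hi : i < lam) (hγ : γ ≤ η i)
    (h : partialSum η i + γ ≤ α) : L i γ ≤ concatFiltration N η L lam α :=
  le_sup_of_le_right (le_iSup₂_of_le i γ (le_iSup_of_le ⟨hi, hγ, h⟩ le_rfl))

theorem concatFiltration_le {T : Submodule R M} (h₀ : N 0 ≤ T)
    (h : ∀ i γ, i < lam → γ ≤ η i → partialSum η i + γ ≤ α → L i γ ≤ T) :
    concatFiltration N η L lam α ≤ T :=
  sup_le h₀ (iSup₂_le fun i γ => iSup_le fun hc => h i γ hc.1 hc.2.1 hc.2.2)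

theorem concatFiltration_mono : Monotone (concatFiltration N η L lam) :=
  fun _ _ hαβ => concatFiltration_le le_sup_left fun _ _ hi hγ h =>
    le_concatFiltration hi hγ (h.trans hαβ)

structure IsFilteredChain (C : Set (ModuleCat.{v} R)) (N : Ordinal.{v} → Submodule R M)
    (lam : Ordinal.{v}) (η : Ordinal.{v} → Ordinal.{v})
    (L : Ordinal.{v} → Ordinal.{v} → Submodule R M) : Prop where
  mono : Monotone N
  continuous : ∀ i, IsSuccLimit i → N i = ⨆ j : {j : Ordinal.{v} // j < i}, N j.1
  step : ∀ i < lam, IsRelCFiltration C (N i) (N (i + 1)) (η i) (L i)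

namespace IsFilteredChain

variable (hN : IsFilteredChain C N lam η L)
include hN

theorem concatFiltration_partialSum {j : Ordinal.{v}} (hj : j ≤ lam) :
    concatFiltration N η L lam (partialSum η j) = N j := by
  apply le_antisymm
  · refine concatFiltration_le (hN.mono zero_le) fun k γ hk hγ h => ?_
    rcases lt_or_ge k j with hkj | hjk
    · exact ((hN.step k hk).le_right hγ).trans (hN.mono (add_one_le_of_lt hkj))
    have hek : partialSum η k = partialSum η j :=
      le_antisymm (le_self_add.trans h) (partialSum_mono hjk)
    have hγ₀ : γ = 0 := by
      rw [← hek] at h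
      exact nonpos_iff_eq_zero.1 (le_of_add_le_add_left (h.trans (add_zero _).ge))
    rw [hγ₀, (hN.step k hk).bot]
    refine le_of_partialSum_eq hN.mono hN.continuous (fun i hi hη => ?_) hk.le hjk hek
    rw [← (hN.step i hi).top, hη, (hN.step i hi).bot]
  · refine (le_sup_iSup_add_one hN.mono hN.continuous j).trans
      (sup_le le_sup_left (iSup_le fun ⟨k, hk⟩ => ?_))
    rw [← (hN.step k (hk.trans_le hj)).top]
    exact le_concatFiltration (hk.trans_le hj) le_rfl
      (partialSum_add_one k ▸ partialSum_mono (add_one_le_of_lt hk))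

theorem concatFiltration_eq_of_mem_block {i : Ordinal.{v}} (hi : i < lam)
    (h₁ : partialSum η i ≤ α) (h₂ : α ≤ partialSum η (i + 1)) :
    concatFiltration N η L lam α = L i (α - partialSum η i) := by
  have hδ : α - partialSum η i ≤ η i := Ordinal.sub_le.2 (partialSum_add_one i ▸ h₂)
  have hNi : N i ≤ L i (α - partialSum η i) := (hN.step i hi).left_le hδ
  rcases h₂.lt_or_eq with h₂ | rfl
  · refine le_antisymm (concatFiltration_le ((hN.mono zero_le).trans hNi) fun k γ hk hγ h => ?_)
      (le_concatFiltration hi hδ (Ordinal.add_sub_cancel_of_le h₁).le)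
    rcases lt_trichotomy k i with hki | rfl | hik
    · exact ((hN.step k hk).le_right hγ).trans ((hN.mono (add_one_le_of_lt hki)).trans hNi)
    · exact (hN.step k hk).mono γ _ (Ordinal.le_sub_of_add_le h) hδ
    · exact absurd ((partialSum_mono (add_one_le_of_lt hik)).trans (le_self_add.trans h))
        h₂.not_ge
  · rw [hN.concatFiltration_partialSum (add_one_le_of_lt hi), partialSum_add_one,
      Ordinal.add_sub_cancel, (hN.step i hi).top]

theorem concatFiltration_le_iSup (hα : α ≤ partialSum η lam) (hlim : IsSuccLimit α) :
    concatFiltration N η L lam α ≤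
      ⨆ β : {β : Ordinal.{v} // β < α}, concatFiltration N η L lam β.1 := by
  rcases Ordinal.exists_partialSum_block hlim.bot_lt hα with
    ⟨k, hk, h₁, h₂⟩ | ⟨j, hj, hjlim, rfl, hbelow⟩
  · set δ := α - partialSum η k
    have hkδ : partialSum η k + δ = α := Ordinal.add_sub_cancel_of_le h₁.le
    have hδ : δ ≤ η k := Ordinal.sub_le.2 (partialSum_add_one k ▸ h₂)
    -- `α` is a limit lying strictly above the start of its block, so its offset is a limit too
    have hδlim : IsSuccLimit δ := by
      rw [← hkδ, Ordinal.isSuccLimit_add_iff] at hlim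
      refine hlim.resolve_right fun ⟨hδ₀, _⟩ => h₁.ne ?_
      rw [← hkδ, hδ₀, add_zero]
    rw [hN.concatFiltration_eq_of_mem_block hk h₁.le h₂,
      (hN.step k hk).continuous δ hδ hδlim]
    refine iSup_le fun ⟨δ', hδ'⟩ =>
      le_iSup_of_le ⟨partialSum η k + δ', hkδ ▸ add_lt_add_right hδ' _⟩ ?_
    rw [hN.concatFiltration_eq_of_mem_block hk le_self_add
      (partialSum_add_one k ▸ add_le_add_right (hδ'.le.trans hδ) _), Ordinal.add_sub_cancel]
  · rw [hN.concatFiltration_partialSum hj, hN.continuous j hjlim]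
    exact iSup_le fun ⟨k, hk⟩ => le_iSup_of_le ⟨partialSum η k, hbelow k hk⟩
      (hN.concatFiltration_partialSum (hk.le.trans hj)).ge

theorem concatFiltration_quot (hα : α + 1 ≤ partialSum η lam) :
    ∃ P ∈ C, Nonempty (SubQuot R (concatFiltration N η L lam α)
      (concatFiltration N η L lam (α + 1)) ≃ₗ[R] P) := by
  rcases Ordinal.exists_partialSum_block (α := α + 1) (by simp) hα with
    ⟨k, hk, h₁, h₂⟩ | ⟨j, -, hjlim, hj, hbelow⟩
  · have h₁ := lt_add_one_iff.1 h₁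
    set δ := α - partialSum η k
    have hkδ : partialSum η k + δ = α := Ordinal.add_sub_cancel_of_le h₁
    have hδ : δ + 1 ≤ η k := by
      rwa [← add_le_add_iff_left (partialSum η k), ← add_assoc, hkδ, ← partialSum_add_one]
    have hδ₁ : α + 1 - partialSum η k = δ + 1 := by
      rw [← hkδ, add_assoc, Ordinal.add_sub_cancel]
    rw [hN.concatFiltration_eq_of_mem_block hk h₁ (le_self_add.trans h₂),
      hN.concatFiltration_eq_of_mem_block hk (h₁.trans le_self_add) h₂, hδ₁]
    exact (hN.step k hk).quot δ hδ
  · refine absurd ?_ (lt_add_one α).not_ge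
    rw [← hj, Ordinal.partialSum_of_isSuccLimit hjlim]
    exact Ordinal.iSup_le fun k => lt_add_one_iff.1 (hbelow k k.2)

theorem isRelCFiltration_concatFiltration :
    IsRelCFiltration C (N 0) (N lam) (partialSum η lam) (concatFiltration N η L lam) where
  bot := by simpa using hN.concatFiltration_partialSum (j := 0) zero_le
  top := hN.concatFiltration_partialSum le_rfl
  mono _ _ h _ := concatFiltration_mono h
  continuous _ hα hlim := le_antisymm (hN.concatFiltration_le_iSup hα hlim)
    (iSup_le fun β => concatFiltration_mono β.2.le)
  quot _ hα := hN.concatFiltration_quot hα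

end IsFilteredChain

theorem exists_isRelCFiltration_of_chain (hmono : Monotone N)
    (hcont : ∀ i, IsSuccLimit i → N i = ⨆ j : {j : Ordinal.{v} // j < i}, N j.1)
    (hstep : ∀ i < lam, ∃ η L, IsRelCFiltration C (N i) (N (i + 1)) η L) :
    ∃ η F, IsRelCFiltration C (N 0) (N lam) η F := by
  choose! η L hL using hstep
  exact ⟨_, _, (IsFilteredChain.mk hmono hcont hL).isRelCFiltration_concatFiltration⟩

end Concatenation

theorem exists_subsingleton_cover {X : Type v} {s : Set X} {μ : Cardinal.{v}} (hs : #s ≤ μ) :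
    ∃ Y : Ordinal.{v} → Set X, (∀ i, (Y i).Subsingleton) ∧
      s ⊆ ⋃ i : {i : Ordinal.{v} // i < μ.ord}, Y i := by
  obtain ⟨f⟩ : Nonempty (s ↪ Set.Iio μ.ord) := by
    rw [← lift_mk_le', Cardinal.mk_Iio_ordinal, Cardinal.card_ord, lift_lift, lift_le]
    exact hs
  refine ⟨fun i => {x | ∃ hx : x ∈ s, (f ⟨x, hx⟩ : Ordinal.{v}) = i}, ?_,
    fun x hx => Set.mem_iUnion.2 ⟨⟨f ⟨x, hx⟩, (f ⟨x, hx⟩).2⟩, hx, rfl⟩⟩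
  rintro i x ⟨hx, rfl⟩ y ⟨_, hxy⟩
  exact congrArg Subtype.val (f.injective (Subtype.ext hxy.symm))

section Game

variable {M : Type v} [AddCommGroup M] [Module R M]

def spanUnionBelow (Z : Ordinal.{v} → Set M) (i : Ordinal.{v}) : Submodule R M :=
  Submodule.span R (⋃ k : {k : Ordinal.{v} // k < i}, Z k.1)

variable {R} {C : Set (ModuleCat.{v} R)} {Z : Ordinal.{v} → Set M}

theorem subset_spanUnionBelow {k i : Ordinal.{v}} (hk : k < i) :
    Z k ⊆ spanUnionBelow R Z i :=
  (Set.subset_iUnion (fun k : {k : Ordinal.{v} // k < i} => Z k.1) ⟨k, hk⟩).trans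
    Submodule.subset_span

theorem spanUnionBelow_mono : Monotone (spanUnionBelow R Z) :=
  fun _ _ hij => Submodule.span_le.2 <|
    Set.iUnion_subset fun k => subset_spanUnionBelow (k.2.trans_le hij)

@[simp]
theorem spanUnionBelow_zero : spanUnionBelow R Z 0 = ⊥ := by
  simp [spanUnionBelow]

theorem spanUnionBelow_of_isSuccLimit {i : Ordinal.{v}} (hi : IsSuccLimit i) :
    spanUnionBelow R Z i = ⨆ j : {j : Ordinal.{v} // j < i}, spanUnionBelow R Z j.1 :=
  le_antisymm (Submodule.span_le.2 (Set.iUnion_subset fun ⟨k, hk⟩ =>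
      (subset_spanUnionBelow (lt_add_one k)).trans <| SetLike.coe_mono <|
        le_iSup (fun j : {j : Ordinal.{v} // j < i} => spanUnionBelow R Z j.1)
          ⟨k + 1, hi.add_one_lt hk⟩))
    (iSup_le fun j => spanUnionBelow_mono j.2.le)

theorem isCFiltered_of_validRound {μ : Cardinal.{v}} {o : Ordinal.{v}} {X : Ordinal.{v} → Set M}
    (hvalid : ∀ i < o, ValidRound R C μ X Z i)
    (hX : Submodule.span R (⋃ i : {i : Ordinal.{v} // i < o}, X i) = ⊤) :
    IsCFiltered R C M := by
  have hsucc : ∀ i < o, spanUnionBelow R Z (i + 1) = Submodule.span R (Z i) := by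
    refine fun i hi => le_antisymm (Submodule.span_le.2 (Set.iUnion_subset fun ⟨k, hk⟩ => ?_))
      (Submodule.span_le.2 (subset_spanUnionBelow (lt_add_one i)))
    rcases (lt_add_one_iff.1 hk).lt_or_eq with hk | rfl
    · exact fun x hx => (hvalid i hi).2.1 (Or.inr (Set.mem_iUnion.2 ⟨⟨k, hk⟩, hx⟩))
    · exact Submodule.subset_span
  have hstep : ∀ i < o, ∃ η L, IsRelCFiltration C (spanUnionBelow R Z i)
      (spanUnionBelow R Z (i + 1)) η L := fun i hi => by
    rw [hsucc i hi]
    exact (hvalid i hi).2.2.exists_isRelCFiltration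
      (Submodule.span_le.2 fun x hx => (hvalid i hi).2.1 (Or.inr hx))
  have htop : spanUnionBelow R Z o = ⊤ := by
    refine top_unique (hX ▸ Submodule.span_le.2 (Set.iUnion_subset fun ⟨i, hi⟩ x hx => ?_))
    refine spanUnionBelow_mono (add_one_le_of_lt hi) ?_
    rw [hsucc i hi]
    exact (hvalid i hi).2.1 (Or.inl hx)
  obtain ⟨η, F, hF⟩ := exists_isRelCFiltration_of_chain spanUnionBelow_mono
    (fun _ => spanUnionBelow_of_isSuccLimit) hstep
  rw [spanUnionBelow_zero, htop] at hF
  exact hF.isCFiltered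

end Game

theorem cFiltered_of_p2Wins (μ : Cardinal.{v}) (hreg : μ.IsRegular)
    (C : Set (ModuleCat.{v} R))
    (M : Type v) [AddCommGroup M] [Module R M]
    (hgen : ∃ s : Set M, #s ≤ μ ∧ Submodule.span R s = ⊤)
    (h : P2WinsFiltGame R C μ M) : IsCFiltered R C M := by
  obtain ⟨s, hs, hspan⟩ := hgen
  obtain ⟨τ, -, hτ⟩ := h
  obtain ⟨X, hX, hsX⟩ := exists_subsingleton_cover hs
  have hXsmall : ∀ i < μ.ord, #(X i) < μ := fun i _ =>
    (hX i).cardinalMk_le_one.trans_lt (one_lt_aleph0.trans_le hreg.aleph0_le)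
  exact isCFiltered_of_validRound (hτ X hXsmall) (top_unique (hspan ▸ Submodule.span_mono hsX))
end
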